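/- arXiv:2502.05733 — 11 statements merged into one kernel-verified Lean document; each statement's English description precedes it below -/
import Mathlib

section
/- For every m ≥ 1, set n = 2^(2^(m+1)). Then for all natural numbers c_1, …, c_m and every natural number x, there exists a natural number y with x + 1 ≤ y ≤ x + n such that for every i ∈ {1, …, m}, the number y + c_i does not belong to A. -/
/-- The set `A`: natural numbers `n` such that for every `k`, some binary digit of `n`
in position `i` with `2^k ≤ i < 2^(k+1)` is zero. -/
def setA : Set ℕ :=
  {n : ℕ | ∀ k : ℕ, ∃ i : ℕ, 2 ^ k ≤ i ∧ i < 2 ^ (k + 1) ∧ ¬ n.testBit i}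

/-!
A number lies outside `setA` as soon as one block `B_k` of its binary expansion consists of ones
only, i.e. as soon as its base-`2 ^ 2 ^ k` digit `N / 2 ^ 2 ^ k % 2 ^ 2 ^ k` is maximal. This digit
only depends on `N` modulo `2 ^ 2 ^ (k + 1)`. So one can choose a residue `r` modulo
`2 ^ 2 ^ (m + 1)` block by block: adding a multiple `t * 2 ^ 2 ^ (i + 1)` to `r` leaves the
blocks `B_1, …, B_i` of every `r + c j` untouched and, for a suitable `t`, fills the block
`B_(i+1)` of `r + c i`. Every interval of length `2 ^ 2 ^ (m + 1)` contains a number congruent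
to `r`.
-/

def blockDigit (N k : ℕ) : ℕ := N / 2 ^ 2 ^ k % 2 ^ 2 ^ k

lemma Nat.testBit_of_div_two_pow_mod_two_pow_eq {N a w i : ℕ}
    (h : N / 2 ^ a % 2 ^ w = 2 ^ w - 1) (hai : a ≤ i) (hiw : i < a + w) : N.testBit i := by
  have hbit := congrArg (Nat.testBit · (i - a)) h
  simp only [Nat.testBit_mod_two_pow, Nat.testBit_div_two_pow, Nat.testBit_two_pow_sub_one,
    Nat.sub_add_cancel hai] at hbit
  simpa [show i - a < w by omega] using hbit

lemma not_mem_setA_of_blockDigit_eq {N k : ℕ} (h : blockDigit N k = 2 ^ 2 ^ k - 1) :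
    N ∉ setA := fun hA => by
  obtain ⟨i, hki, hik, hbit⟩ := hA k
  exact hbit (Nat.testBit_of_div_two_pow_mod_two_pow_eq h hki (by rw [pow_succ] at hik; omega))

lemma two_pow_two_pow_mul_self (k : ℕ) : 2 ^ 2 ^ k * 2 ^ 2 ^ k = 2 ^ 2 ^ (k + 1) := by
  rw [← pow_add, pow_succ, mul_two]

lemma blockDigit_eq_of_modEq {N N' k : ℕ} (h : N ≡ N' [MOD 2 ^ 2 ^ (k + 1)]) :
    blockDigit N k = blockDigit N' k := by
  rw [blockDigit, blockDigit, ← Nat.mod_mul_right_div_self, ← Nat.mod_mul_right_div_self,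
    two_pow_two_pow_mul_self, h]

lemma two_pow_two_pow_dvd {k m : ℕ} (h : k ≤ m) : 2 ^ 2 ^ k ∣ 2 ^ 2 ^ m :=
  Nat.pow_dvd_pow 2 (Nat.pow_le_pow_right two_pos h)

lemma exists_blockDigit_eq (m : ℕ) (c : Fin m → ℕ) :
    ∃ r, ∀ i : Fin m, blockDigit (r + c i) (i + 1) = 2 ^ 2 ^ ((i : ℕ) + 1) - 1 := by
  induction m with
  | zero => exact ⟨0, fun i => i.elim0⟩
  | succ m ih =>
    obtain ⟨r, hr⟩ := ih (c ∘ Fin.castSucc)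
    set M := 2 ^ 2 ^ (m + 1)
    have hM : 0 < M := by positivity
    set q := (r + c (Fin.last m)) / M
    -- `t` is chosen so that the digit `q + t` of `r + t * M + c (last m)` is `M - 1` mod `M`
    set t := M - 1 - q % M
    refine ⟨r + t * M, Fin.lastCases ?_ fun j => ?_⟩
    · have hdigit : (r + t * M + c (Fin.last m)) / M = M * (q / M) + (M - 1) := by
        rw [add_right_comm, Nat.add_mul_div_right _ _ hM]
        have := Nat.div_add_mod q M
        have := Nat.mod_lt q hM
        omega
      rw [Fin.val_last, blockDigit, hdigit, Nat.mul_add_mod, Nat.mod_eq_of_lt (by omega)]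
    · have hmod : r + t * M + c j.castSucc ≡ r + c j.castSucc [MOD M] := by
        rw [add_right_comm]
        exact Nat.add_mul_modulus_modEq_iff.mpr rfl
      rw [Fin.val_castSucc, blockDigit_eq_of_modEq
        (hmod.of_dvd (two_pow_two_pow_dvd (by omega)))]
      exact hr j

lemma Nat.exists_modEq_of_lt_of_le_add (x r : ℕ) {N : ℕ} (hN : 0 < N) :
    ∃ y, x < y ∧ y ≤ x + N ∧ y ≡ r [MOD N] := by
  refine ⟨x + N - (x + N - r % N) % N, ?_, ?_, ?_⟩
  · have := Nat.mod_lt (x + N - r % N) hN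
    omega
  · omega
  · have := Nat.mod_lt r hN
    have := Nat.div_add_mod (x + N - r % N) N
    have hy : x + N - (x + N - r % N) % N = r % N + N * ((x + N - r % N) / N) := by omega
    rw [hy]
    exact Nat.add_modulus_mul_modEq_iff.mpr (Nat.mod_modEq r N)

theorem stmt_0_general (m : ℕ) (c : Fin m → ℕ) (x : ℕ) :
    ∃ y : ℕ, x + 1 ≤ y ∧ y ≤ x + 2 ^ (2 ^ (m + 1)) ∧ ∀ i : Fin m, y + c i ∉ setA := by
  obtain ⟨r, hr⟩ := exists_blockDigit_eq m c
  obtain ⟨y, hxy, hyx, hy⟩ := Nat.exists_modEq_of_lt_of_le_add x r (N := 2 ^ 2 ^ (m + 1))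
    (by positivity)
  refine ⟨y, hxy, hyx, fun i => not_mem_setA_of_blockDigit_eq (k := i + 1) ?_⟩
  have hdvd := two_pow_two_pow_dvd (show (i : ℕ) + 1 + 1 ≤ m + 1 by omega)
  rw [blockDigit_eq_of_modEq ((hy.add_right (c i)).of_dvd hdvd), hr i]

theorem stmt_0 (m : ℕ) (hm : 1 ≤ m) (c : Fin m → ℕ) (x : ℕ) :
    ∃ y : ℕ, x + 1 ≤ y ∧ y ≤ x + 2 ^ (2 ^ (m + 1)) ∧ ∀ i : Fin m, y + c i ∉ setA :=
  stmt_0_general m c x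
end

section
/- The set A is not piecewise syndetic in the additive semigroup (ℕ, +). -/
/-- A subset `Y` of an additive semigroup is thick if every finite set can be
translated into `Y`. -/
def AddThick {S : Type*} [Add S] (Y : Set S) : Prop :=
  ∀ H : Finset S, ∃ s : S, ∀ h ∈ H, h + s ∈ Y

/-- A subset `X` of an additive semigroup is piecewise syndetic if finitely many
translates of `X` union to a thick set. -/
def AddPiecewiseSyndetic {S : Type*} [Add S] (X : Set S) : Prop :=
  ∃ H : Finset S, AddThick (⋃ t ∈ H, {s : S | t + s ∈ X})

theorem stmt_1 : ¬ AddPiecewiseSyndetic setA := by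
  rintro ⟨H, hth⟩
  set k : ℕ := H.sup id with hk
  set P : ℕ := 2 ^ (2 ^ k) with hP
  have hP1 : 1 ≤ P := Nat.one_le_two_pow
  set M : ℕ := 2 ^ (2 ^ (k + 1)) with hM
  have hMP : M = P * P := by
    rw [hM, hP, ← pow_add]
    congr 1
    rw [pow_succ]
    ring
  have hM0 : 0 < M := Nat.pow_pos (by norm_num)
  set x : ℕ := P * (P - 1) with hx
  have hxM : x + P ≤ M := by
    rw [hMP, hx]
    have : P * (P - 1) + P * 1 = P * P := by
      rw [← Nat.mul_add]
      congr 1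
      omega
    omega
  -- every element of H is < P
  have htP : ∀ t ∈ H, t < P := by
    intro t ht
    have h1 : t ≤ k := Finset.le_sup (f := id) ht
    have h2 : k < 2 ^ k := Nat.lt_two_pow_self
    have h3 : 2 ^ k ≤ 2 ^ (2 ^ k) := Nat.pow_le_pow_right (by norm_num) (Nat.le_of_lt h2)
    omega
  obtain ⟨s, hs⟩ := hth (Finset.range M)
  set g : ℕ := (x + (M - s % M)) % M with hg
  have hgM : g < M := Nat.mod_lt _ hM0
  set n : ℕ := g + s with hn
  have hsM : s % M < M := Nat.mod_lt _ hM0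
  have hmod : n % M = x := by
    have hdm : M * (s / M) + s % M = s := Nat.div_add_mod s M
    have he : x + (M - s % M) + s = x + M * (s / M + 1) := by
      have : M * (s / M + 1) = M * (s / M) + M := by ring
      omega
    rw [hn, hg, Nat.mod_add_mod, he, Nat.add_mul_mod_self_left,
      Nat.mod_eq_of_lt (by omega)]
  have hmem := hs g (Finset.mem_range.mpr hgM)
  rw [Set.mem_iUnion₂] at hmem
  obtain ⟨t, htH, hA⟩ := hmem
  have htP' : t < P := htP t htH
  obtain ⟨i, hi1, hi2, hbit⟩ := hA k
  apply hbit
  -- t + n ≡ t + x  (mod M), and t + x < M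
  have hmod2 : (t + n) % M = t + x := by
    rw [Nat.add_mod, hmod, Nat.mod_eq_of_lt (show t < M by nlinarith), Nat.mod_eq_of_lt]
    omega
  have hiM : i < 2 ^ (k + 1) := hi2
  have hexp : 2 ^ (k + 1) ≤ 2 ^ (2 ^ (k + 1)) :=
    Nat.pow_le_pow_right (by norm_num) (Nat.le_of_lt Nat.lt_two_pow_self)
  have key : (t + n).testBit i = ((t + n) % M).testBit i := by
    rw [hM, Nat.testBit_mod_two_pow, decide_eq_true (by omega : i < 2 ^ (k + 1)),
      Bool.true_and]
  rw [key, hmod2]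
  have ht2 : t < 2 ^ (2 ^ k) := htP'
  have : t + x = 2 ^ (2 ^ k) * (P - 1) + t := by rw [hx, hP]; ring
  rw [this, Nat.testBit_two_pow_mul_add (P - 1) ht2 i]
  have hik : ¬ i < 2 ^ k := by omega
  rw [if_neg hik, hP]
  have : (2 : ℕ) ^ (2 ^ k) - 1 = 2 ^ (2 ^ k) - 1 := rfl
  rw [Nat.testBit_two_pow_sub_one]
  have h2k : 2 ^ k ≤ 2 ^ (2 ^ k) :=
    Nat.pow_le_pow_right (by norm_num) (Nat.le_of_lt Nat.lt_two_pow_self)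
  have : i - 2 ^ k < 2 ^ k := by
    have : 2 ^ (k + 1) = 2 ^ k + 2 ^ k := by rw [pow_succ]; ring
    omega
  simp
  omega
end

section
/- Let X ⊆ ℕ. If X, viewed as a subset of ℤ, is piecewise syndetic in the additive group (ℤ, +), then X is piecewise syndetic in the additive semigroup (ℕ, +). -/
/-!
The thick union `Y = ⋃ t ∈ H, (X - t) ⊆ ℤ` is bounded below, since `X ⊆ ℕ` and `H` is finite.
A thick set bounded below by `c` contains translates `F + s` with `s ∈ Y`, hence `s ≥ c`, so after
a shift the translating elements can be taken in `ℕ`. Shifting `H` by a constant `M` with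
`H + M ⊆ ℕ` then turns `Y - M` into a union of translates of `X` inside `ℕ`.
-/

theorem AddThick.setOf_natCast_add_mem_of_bddBelow {Y : Set ℤ} (hY : AddThick Y)
    (hbdd : BddBelow Y) (k : ℤ) : AddThick {n : ℕ | (n : ℤ) + k ∈ Y} := by
  obtain ⟨c, hc⟩ := hbdd
  intro F
  -- translating `0` as well makes `s ∈ Y`, hence `c ≤ s`
  obtain ⟨s, hs⟩ := hY (insert 0 (F.image fun h : ℕ => (h : ℤ) + k - c))
  have hcs : c ≤ s := hc (by simpa using hs 0 (Finset.mem_insert_self _ _))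
  refine ⟨(s - c).toNat, fun h hF => ?_⟩
  have hmem := hs _ (Finset.mem_insert_of_mem (Finset.mem_image_of_mem _ hF))
  simp only [Set.mem_ofPred_eq]
  push_cast [Int.toNat_of_nonneg (sub_nonneg.mpr hcs)]
  convert hmem using 1
  ring

theorem bddBelow_iUnion_translates_natCast_image (H : Finset ℤ) (X : Set ℕ) :
    BddBelow (⋃ t ∈ H, {s : ℤ | t + s ∈ ((↑) : ℕ → ℤ) '' X}) := by
  refine (H.finite_toSet.bddBelow_biUnion).mpr fun t _ => ⟨-t, ?_⟩
  rintro s ⟨n, -, hn⟩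
  have : (0 : ℤ) ≤ t + s := hn ▸ n.cast_nonneg
  linarith

theorem iUnion_translates_image_toNat_add (H : Finset ℤ) (X : Set ℕ) {M : ℤ}
    (hM : ∀ t ∈ H, 0 ≤ t + M) :
    ⋃ t ∈ H.image fun t => (t + M).toNat, {n : ℕ | t + n ∈ X} =
      {n : ℕ | (n : ℤ) + M ∈ ⋃ t ∈ H, {s : ℤ | t + s ∈ ((↑) : ℕ → ℤ) '' X}} := by
  ext n
  simp only [Set.mem_iUnion, Set.mem_ofPred_eq, Finset.mem_image, exists_prop, Set.mem_image]
  constructor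
  · rintro ⟨_, ⟨t, ht, rfl⟩, hX⟩
    refine ⟨t, ht, _, hX, ?_⟩
    push_cast [Int.toNat_of_nonneg (hM t ht)]
    ring
  · rintro ⟨t, ht, m, hX, hm⟩
    refine ⟨_, ⟨t, ht, rfl⟩, ?_⟩
    convert hX
    zify [hM t ht]
    rw [Int.toNat_of_nonneg (hM t ht), hm]
    ring

theorem stmt_2 (X : Set ℕ)
    (h : AddPiecewiseSyndetic (((↑) : ℕ → ℤ) '' X)) :
    AddPiecewiseSyndetic X := by
  obtain ⟨H, hH⟩ := h
  obtain ⟨c, hc⟩ := H.bddBelow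
  have hshift : ∀ t ∈ H, 0 ≤ t + -c := fun t ht => by linarith [hc ht]
  refine ⟨H.image fun t => (t + -c).toNat, ?_⟩
  rw [iUnion_translates_image_toNat_add H X hshift]
  exact hH.setOf_natCast_add_mem_of_bddBelow (bddBelow_iUnion_translates_natCast_image H X) (-c)
end

section
/- The set A, viewed as a subset of ℤ, is not piecewise syndetic in the additive group (ℤ, +). -/
lemma testBit_div_pow (n i j : ℕ) : (n/2^i).testBit j = n.testBit (i+j) := by
  simp [Nat.testBit_eq_decide_div_mod_eq, Nat.div_div_eq_div_mul, pow_add]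

lemma key (q n : ℕ) (hmod : 2^(2*q) - 2^q ≤ n % 2^(2*q)) (i : ℕ)
    (h1 : q ≤ i) (h2 : i < 2*q) : n.testBit i = true := by
  set r := n % 2^(2*q) with hr
  have hrlt : r < 2^(2*q) := Nat.mod_lt _ (by positivity)
  have hdiv : r / 2^q = 2^q - 1 := by
    have hQ : (0:ℕ) < 2^q := by positivity
    have hfac : 2^(2*q) = 2^q * 2^q := by rw [two_mul, pow_add]
    have hlow : 2^q - 1 ≤ r / 2^q := by
      rw [Nat.le_div_iff_mul_le hQ]
      calc (2^q - 1) * 2^q = 2^q * 2^q - 2^q := by rw [Nat.sub_mul, one_mul]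
        _ = 2^(2*q) - 2^q := by rw [hfac]
        _ ≤ r := hmod
    have hhigh : r / 2^q < 2^q := by
      rw [Nat.div_lt_iff_lt_mul hQ, ← hfac]; exact hrlt
    omega
  have : n.testBit i = r.testBit i := by
    rw [hr, Nat.testBit_mod_two_pow]
    simp [h2]
  rw [this]
  have : r.testBit i = (r / 2^q).testBit (i - q) := by
    rw [testBit_div_pow]; congr 1; omega
  rw [this, hdiv, Nat.testBit_two_pow_sub_one]
  simp; omega

theorem stmt_3 : ¬ AddPiecewiseSyndetic (((↑) : ℕ → ℤ) '' setA) := by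
  rintro ⟨H, thick⟩
  set m : ℕ := H.sup (fun t => t.natAbs) with hm
  set k : ℕ := 2*m+1 with hk
  set q : ℕ := 2^k with hq
  have hmq : 2*m < q := by
    have := Nat.lt_two_pow_self (n := k)
    omega
  set P : ℕ := 2^(2*q) with hP
  set Q : ℕ := 2^q with hQ
  have hQP : Q ≤ P := Nat.pow_le_pow_right (by norm_num) (by omega)
  have hQpos : 0 < Q := by positivity
  have hPpos : (0:ℤ) < (P:ℤ) := by positivity
  obtain ⟨s, hs⟩ := thick ((Finset.range P).image (Nat.cast : ℕ → ℤ))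
  set c : ℤ := (P : ℤ) - Q + m with hc
  set h0 : ℤ := (c - s) % P with hh0
  have h0nonneg : 0 ≤ h0 := Int.emod_nonneg _ (ne_of_gt hPpos)
  have h0lt : h0 < P := Int.emod_lt_of_pos _ hPpos
  have h0cast : ((h0.toNat : ℤ)) = h0 := Int.toNat_of_nonneg h0nonneg
  have hmemF : (h0.toNat : ℤ) ∈ (Finset.range P).image (Nat.cast : ℕ → ℤ) := by
    refine Finset.mem_image.2 ⟨h0.toNat, Finset.mem_range.2 ?_, rfl⟩
    omega
  have := hs _ hmemF
  simp only [Set.mem_iUnion, Set.mem_setOf_eq] at this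
  obtain ⟨t, ht, n, hn, hcast⟩ := this
  -- bound on t
  have htm : t.natAbs ≤ m := Finset.le_sup (f := fun t => t.natAbs) ht
  have htlb : -(m:ℤ) ≤ t := by omega
  have htub : t ≤ (m:ℤ) := by omega
  -- (n : ℤ) = t + h0 + s
  rw [h0cast] at hcast
  -- modular computation
  have hmodeq : (n : ℤ) % P = (t + c) % P := by
    rw [hcast]
    have h1 : h0 % (P:ℤ) = (c - s) % P := by
      rw [hh0]; exact Int.emod_emod_of_dvd _ dvd_rfl
    have h2 : (t + (h0 + s)) % (P:ℤ) = (t + ((c - s) + s)) % P :=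
      Int.ModEq.add_left t (Int.ModEq.add_right s h1)
    rw [h2]; ring_nf
  have hcrange : 0 ≤ t + c ∧ t + c < (P:ℤ) := by
    have hQP' : (Q:ℤ) ≤ P := by exact_mod_cast hQP
    have hmQ : 2*m < Q := hmq.trans_le (Nat.lt_two_pow_self (n := q)).le
    have hmq' : 2*(m:ℤ) < Q := by exact_mod_cast hmQ
    constructor <;> omega
  have htc : (t + c) % (P:ℤ) = t + c := Int.emod_eq_of_lt hcrange.1 hcrange.2
  have hnmod : ((n % P : ℕ) : ℤ) = t + c := by
    push_cast
    rw [hmodeq, htc]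
  have hge : P - Q ≤ n % P := by
    have : ((P:ℤ) - Q ≤ ((n % P : ℕ) : ℤ)) := by rw [hnmod]; omega
    have h3 : ((P - Q : ℕ) : ℤ) ≤ ((n % P : ℕ) : ℤ) := by
      rw [Nat.cast_sub hQP]; exact this
    exact_mod_cast h3
  obtain ⟨i, hi1, hi2, hbit⟩ := hn k
  have h2k : 2^(k+1) = 2*q := by rw [hq, pow_succ]; ring
  have hq' : 2^k = q := hq.symm
  exact hbit (key q n hge i (hq' ▸ hi1) (by omega))
end

section
/- Let n ≥ 1 and let G be an additive abelian group such that the subgroup 2^(n+1)·G = {2^(n+1)·g : g ∈ G} has finite index in G. Then for all sequences f_1, …, f_n : ℕ → G there exist m ≥ 1 and natural numbers t(1) < t(2) < … < t(m) such that for every i ∈ {1, …, n}, the sum f_i(t(1)) + f_i(t(2)) + … + f_i(t(m)) belongs to 2^(n+1)·G; moreover one can take m = 2^(n+1). -/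
/-!
Record at each time `k` the residues of `f 1 k, …, f n k` modulo `H = 2^(n+1)·G`. These vectors
lie in the finite group `(G ⧸ H)ⁿ`, so by the infinite pigeonhole principle some vector `c` is
attained at infinitely many times `t(1) < t(2) < …`. Summing `f i` over the first `N = 2^(n+1)` of
them gives `N • c i` modulo `H`, and `N` kills `G ⧸ N·G`.
-/

/-- The subgroup `N • G = {N • g : g ∈ G}` of an additive abelian group `G`. -/
def nsmulSubgroup (G : Type*) [AddCommGroup G] (N : ℕ) : AddSubgroup G where
  carrier := {x : G | ∃ g : G, N • g = x}
  zero_mem' := ⟨0, smul_zero N⟩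
  add_mem' := by
    rintro a b ⟨x, rfl⟩ ⟨y, rfl⟩
    exact ⟨x + y, smul_add N x y⟩
  neg_mem' := by
    rintro a ⟨x, rfl⟩
    exact ⟨-x, smul_neg N x⟩

theorem Finite.exists_strictMono_comp_eq {α : Type*} [Finite α] (φ : ℕ → α) :
    ∃ c : α, ∃ t : ℕ → ℕ, StrictMono t ∧ ∀ k, φ (t k) = c := by
  obtain ⟨c, hc⟩ := Finite.exists_infinite_fiber φ
  exact ⟨c, Filter.extraction_of_frequently_atTop
    (Nat.frequently_atTop_iff_infinite.2 (Set.infinite_coe_iff.1 hc))⟩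

theorem nsmulSubgroup.nsmul_eq_zero {G : Type*} [AddCommGroup G] (N : ℕ)
    (c : G ⧸ nsmulSubgroup G N) : N • c = 0 := by
  obtain ⟨g, rfl⟩ := QuotientAddGroup.mk_surjective c
  rw [← QuotientAddGroup.mk_nsmul, QuotientAddGroup.eq_zero_iff]
  exact ⟨g, rfl⟩

theorem sum_mem_nsmulSubgroup_of_mk_eq {G : Type*} [AddCommGroup G] {N : ℕ}
    (x : Fin N → G) (c : G ⧸ nsmulSubgroup G N) (hx : ∀ j, (x j : G ⧸ nsmulSubgroup G N) = c) :
    ∑ j, x j ∈ nsmulSubgroup G N := by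
  rw [← QuotientAddGroup.eq_zero_iff, QuotientAddGroup.mk_sum, Finset.sum_congr rfl fun j _ => hx j,
    Finset.sum_const, Finset.card_univ, Fintype.card_fin, nsmulSubgroup.nsmul_eq_zero]

theorem stmt_4_general (n : ℕ) (G : Type*) [AddCommGroup G]
    (hfin : Finite (G ⧸ nsmulSubgroup G (2 ^ (n + 1))))
    (f : Fin n → ℕ → G) :
    ∃ m : ℕ, m = 2 ^ (n + 1) ∧ 1 ≤ m ∧ ∃ t : Fin m → ℕ, StrictMono t ∧
      ∀ i : Fin n, (∑ j : Fin m, f i (t j)) ∈ nsmulSubgroup G (2 ^ (n + 1)) := by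
  obtain ⟨c, t, ht, hc⟩ := Finite.exists_strictMono_comp_eq
    fun k (i : Fin n) => (f i k : G ⧸ nsmulSubgroup G (2 ^ (n + 1)))
  refine ⟨2 ^ (n + 1), rfl, Nat.one_le_two_pow, fun j => t j, ht.comp Fin.val_strictMono,
    fun i => sum_mem_nsmulSubgroup_of_mk_eq _ (c i) fun j => congrFun (hc j) i⟩

theorem stmt_4 (n : ℕ) (hn : 1 ≤ n) (G : Type*) [AddCommGroup G]
    (hfin : Finite (G ⧸ nsmulSubgroup G (2 ^ (n + 1))))
    (f : Fin n → ℕ → G) :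
    ∃ m : ℕ, m = 2 ^ (n + 1) ∧ 1 ≤ m ∧ ∃ t : Fin m → ℕ, StrictMono t ∧
      ∀ i : Fin n, (∑ j : Fin m, f i (t j)) ∈ nsmulSubgroup G (2 ^ (n + 1)) :=
  stmt_4_general n G hfin f
end

section
/- Let n ≥ 1 and let b_1, …, b_n ∈ ℤ be integers each divisible by 2^(n+1). Then there exists a ∈ ℤ such that for every i ∈ {1, …, n}, the integer a + b_i is nonnegative and belongs to A. -/
lemma aux_toNat_emod (x : ℤ) {e E : ℕ} (h : e ≤ E) :
    ((x % (2:ℤ)^E).toNat) % 2^e = ((x % (2:ℤ)^e).toNat) := by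
  have h1 : (0:ℤ) < 2^E := by positivity
  have h2 : (0:ℤ) < 2^e := by positivity
  have k1 := Int.toNat_of_nonneg (Int.emod_nonneg x h1.ne')
  have k2 := Int.toNat_of_nonneg (Int.emod_nonneg x h2.ne')
  have : ((((x % (2:ℤ)^E).toNat) % 2^e : ℕ) : ℤ) = (((x % (2:ℤ)^e).toNat : ℕ) : ℤ) := by
    push_cast [k1, k2]
    rw [Int.emod_emod_of_dvd _ (pow_dvd_pow 2 h)]
  exact_mod_cast this

lemma aux_testBit_toNat {x : ℤ} (hx : 0 ≤ x) {e : ℕ} (j : ℕ) (hj : j < e) :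
    (x.toNat).testBit j = ((x % (2:ℤ)^e).toNat).testBit j := by
  have h2 : (0:ℤ) < 2^e := by positivity
  have : (x % (2:ℤ)^e).toNat = x.toNat % 2^e := by
    have : (((x % (2:ℤ)^e).toNat : ℕ) : ℤ) = ((x.toNat % 2^e : ℕ) : ℤ) := by
      push_cast [Int.toNat_of_nonneg (Int.emod_nonneg x h2.ne'), Int.toNat_of_nonneg hx]
      rfl
    exact_mod_cast this
  rw [this, Nat.testBit_mod_two_pow]
  simp [hj]

lemma aux_testBit_dvd {m j : ℕ} (h : 2^(j+1) ∣ m) : m.testBit j = false := by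
  have h0 : m % 2^(j+1) = 0 := Nat.mod_eq_zero_of_dvd h
  have h1 := Nat.testBit_mod_two_pow m (j+1) j
  rw [h0] at h1
  simpa using h1.symm

lemma aux_exists_zero_bit {w e : ℕ} (hw : w < 2^e) (hne : w ≠ 2^e - 1) :
    ∃ j, j < e ∧ w.testBit j = false := by
  by_contra hcon
  push_neg at hcon
  apply hne (Nat.eq_of_testBit_eq fun j => ?_)
  rcases Nat.lt_or_ge j e with hj | hj
  · have h := hcon j hj
    simp only [Nat.testBit_two_pow_sub_one, hj, decide_true]
    simpa using h
  · rw [Nat.testBit_lt_two_pow (lt_of_lt_of_le hw (Nat.pow_le_pow_right (by norm_num) hj)),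
      Nat.testBit_two_pow_sub_one]
    simp [Nat.not_lt.2 hj]

lemma aux_testBit_high {w v e j : ℕ} (hv : v < 2^e) :
    (w * 2^e + v).testBit (e + j) = w.testBit j := by
  rw [Nat.testBit_eq_decide_div_mod_eq, Nat.testBit_eq_decide_div_mod_eq, pow_add, ← Nat.div_div_eq_div_mul,
    mul_comm w, Nat.mul_add_div (by positivity), Nat.div_eq_of_lt hv, add_zero]

lemma aux_key (n : ℕ) (b : Fin n → ℤ)
    (hb : ∀ i, (2 ^ (n + 1) : ℤ) ∣ b i) (K : ℕ) :
    ∃ a : ℕ, a < 2 ^ 2 ^ K ∧ (2 ^ (n + 1) : ℤ) ∣ (a : ℤ) ∧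
      ∀ i : Fin n, ∀ k < K, ∃ j : ℕ, 2 ^ k ≤ j ∧ j < 2 ^ (k + 1) ∧
        ¬ (((a : ℤ) + b i) % (2 : ℤ) ^ 2 ^ K).toNat.testBit j := by
  induction K with
  | zero =>
    exact ⟨0, by norm_num, by simp, fun i k hk => absurd hk (Nat.not_lt_zero k)⟩
  | succ K ih =>
    obtain ⟨a, ha_lt, ha_dvd, ha_bits⟩ := ih
    set q : ℕ := 2 ^ 2 ^ K with hqdef
    have hq0 : 0 < q := by positivity
    have h2K : 0 < 2 ^ K := by positivity
    have hq2 : 2 ≤ q := by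
      calc (2:ℕ) = 2 ^ 1 := rfl
        _ ≤ 2 ^ 2 ^ K := Nat.pow_le_pow_right (by norm_num) h2K
    have hQq : (2:ℕ) ^ 2 ^ (K+1) = q * q := by
      rw [hqdef, ← pow_add]
      congr 1
      rw [pow_succ]
      ring
    have hQZ : (2:ℤ) ^ 2 ^ (K+1) = ((q * q : ℕ) : ℤ) := by
      push_cast [← hQq]
      norm_num
    -- the "high part" of (a + b i) mod 2^(2^(K+1))
    set u : Fin n → ℕ :=
      fun i => ((((a:ℤ) + b i) % (2:ℤ) ^ 2 ^ (K+1)).toNat) / q with hudef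
    have hstep : ∃ t : ℕ, t < q ∧ (2 ^ (n + 1) : ℤ) ∣ ((t * q : ℕ) : ℤ) ∧
        ∀ i, (u i + t) % q ≠ q - 1 := by
      rcases Nat.lt_or_ge n (2 ^ K) with hcase | hcase
      · -- Case B : n + 1 ≤ 2^K : pigeonhole
        have hnq : n < q := lt_of_lt_of_le (lt_of_lt_of_le hcase (Nat.lt_two_pow_self (n := 2 ^ K)).le)
          le_rfl
        set S : Finset ℕ := Finset.image (fun i => (2*q - 1 - u i % q) % q) Finset.univ with hS
        have hcard : S.card < (Finset.range q).card := by
          rw [Finset.card_range]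
          exact lt_of_le_of_lt (le_trans Finset.card_image_le (by simp)) hnq
        have hnot : ¬ (Finset.range q ⊆ S) := fun hsub =>
          absurd (Finset.card_le_card hsub) (not_le.2 hcard)
        obtain ⟨t, htr, htS⟩ := Finset.not_subset.mp hnot
        have htq : t < q := Finset.mem_range.mp htr
        refine ⟨t, htq, ?_, ?_⟩
        · have : (2:ℤ)^(n+1) ∣ ((q:ℕ):ℤ) := by
            have : (2:ℕ)^(n+1) ∣ q := pow_dvd_pow 2 hcase
            exact_mod_cast Int.natCast_dvd_natCast.mpr this
          push_cast
          exact Dvd.dvd.mul_left this _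
        · intro i heq
          apply htS
          rw [hS, Finset.mem_image]
          refine ⟨i, Finset.mem_univ i, ?_⟩
          set s := (2*q - 1 - u i % q) % q with hsd
          have hsq : s < q := Nat.mod_lt _ hq0
          have huq : u i % q < q := Nat.mod_lt _ hq0
          have hs_eq : (u i + s) % q = q - 1 := by
            have e1 : u i % q + (2*q - 1 - u i % q) ≡ u i + s [MOD q] :=
              Nat.ModEq.add (Nat.mod_modEq _ _) (Nat.mod_modEq _ _).symm
            have e2 : u i % q + (2*q - 1 - u i % q) = q + (q - 1) := by omega
            have e3 : (q + (q-1)) % q = q - 1 := by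
              rw [Nat.add_mod_left]
              exact Nat.mod_eq_of_lt (by omega)
            calc (u i + s) % q = (u i % q + (2*q - 1 - u i % q)) % q := e1.symm
              _ = q - 1 := by rw [e2, e3]
          have : t ≡ s [MOD q] :=
            Nat.ModEq.add_left_cancel' (u i) (heq.trans hs_eq.symm)
          have : t % q = s % q := this
          rw [Nat.mod_eq_of_lt htq, Nat.mod_eq_of_lt hsq] at this
          exact this.symm
      · -- Case A : 2^K ≤ n : take t = 0; parity argument
        refine ⟨0, hq0, by simp, ?_⟩
        intro i
        have hdvd1 : (2:ℤ)^(2^K + 1) ∣ ((a:ℤ) + b i) := by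
          have h1 : (2:ℤ)^(2^K + 1) ∣ (2:ℤ)^(n+1) := pow_dvd_pow 2 (by omega)
          exact h1.trans (dvd_add ha_dvd (hb i))
        have hdvd2 : (2:ℤ)^(2^K + 1) ∣ (2:ℤ)^(2^(K+1)) := by
          apply pow_dvd_pow
          have : 2^(K+1) = 2^K + 2^K := by rw [pow_succ]; ring
          omega
        have hdvd3 : (2:ℤ)^(2^K + 1) ∣ ((a:ℤ) + b i) % (2:ℤ)^(2^(K+1)) := by
          rw [Int.emod_def]
          exact dvd_sub hdvd1 (hdvd2.mul_right _)
        have hdvd4 : (2:ℕ)^(2^K + 1) ∣ (((a:ℤ) + b i) % (2:ℤ)^(2^(K+1))).toNat := by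
          have hnn : (0:ℤ) ≤ ((a:ℤ) + b i) % (2:ℤ)^(2^(K+1)) :=
            Int.emod_nonneg _ (by positivity)
          have : ((2^(2^K + 1) : ℕ) : ℤ) ∣
              (((((a:ℤ) + b i) % (2:ℤ)^(2^(K+1))).toNat : ℕ) : ℤ) := by
            rw [Int.toNat_of_nonneg hnn]
            exact_mod_cast hdvd3
          exact_mod_cast this
        obtain ⟨m, hm⟩ := hdvd4
        have hum : u i = 2 * m := by
          rw [hudef]
          simp only
          rw [hm]
          have : (2:ℕ)^(2^K+1) * m = q * (2 * m) := by
            rw [hqdef, pow_succ]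
            ring
          rw [this, Nat.mul_div_cancel_left _ hq0]
        have h2q : 2 ∣ q := by
          rw [hqdef]
          exact dvd_pow_self 2 h2K.ne'
        have hz : (u i + 0) % q % 2 = (u i + 0) % 2 := Nat.mod_mod_of_dvd _ h2q
        have hqe : q % 2 = 0 := Nat.mod_eq_zero_of_dvd h2q
        intro hcon
        rw [hcon] at hz
        omega
    obtain ⟨t, htq, ht_dvd, ht_good⟩ := hstep
    refine ⟨a + t * q, ?_, ?_, ?_⟩
    · rw [hQq]
      have h1 : t * q ≤ (q-1) * q := Nat.mul_le_mul_right q (by omega)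
      have h2 : (q-1) * q = q*q - 1*q := Nat.sub_mul q 1 q
      have h3 : q ≤ q * q := Nat.le_mul_of_pos_left q hq0
      omega
    · push_cast
      push_cast at ht_dvd
      exact dvd_add ha_dvd ht_dvd
    · intro i k hk
      set x : ℤ := (a:ℤ) + b i with hx
      set r : ℕ := (x % (2:ℤ) ^ 2 ^ (K+1)).toNat with hrdef
      have hrnn : (0:ℤ) ≤ x % (2:ℤ) ^ 2 ^ (K+1) := Int.emod_nonneg _ (by positivity)
      have hrcast : (r:ℤ) = x % (2:ℤ) ^ 2 ^ (K+1) := Int.toNat_of_nonneg hrnn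
      set v : ℕ := r % q with hvdef
      set w : ℕ := (u i + t) % q with hwdef
      have hvq : v < q := Nat.mod_lt _ hq0
      have hwq : w < q := Nat.mod_lt _ hq0
      have hNlt : w * q + v < q * q := by
        have h1 : w * q ≤ (q-1) * q := Nat.mul_le_mul_right q (by omega)
        have h2 : (q-1) * q = q*q - 1*q := Nat.sub_mul q 1 q
        have h3 : q ≤ q * q := Nat.le_mul_of_pos_left q hq0
        omega
      -- key computation of the new residue
      have hui : u i = r / q := rfl
      have hnat : (r + t * q) % (q * q) = w * q + v := by
        have hr2 : r = q * (r / q) + v := (Nat.div_add_mod r q).symm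
        have hut : u i + t = q * ((u i + t)/q) + w := (Nat.div_add_mod _ q).symm
        have e1 : r + t * q = q*q*((u i + t)/q) + (w*q + v) := by
          calc r + t * q = q * (r / q) + v + t * q := by rw [← hr2]
            _ = q * (u i + t) + v := by rw [← hui]; ring
            _ = q * (q * ((u i + t)/q) + w) + v := by rw [← hut]
            _ = q*q*((u i + t)/q) + (w*q + v) := by ring
        rw [e1, Nat.mul_add_mod]
        exact Nat.mod_eq_of_lt hNlt
      have hmodeq : (((a + t * q : ℕ):ℤ) + b i) % (2:ℤ) ^ 2 ^ (K+1) = ((w*q + v : ℕ) : ℤ) := by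
        have hx' : ((a + t * q : ℕ):ℤ) + b i = x + ((t*q : ℕ):ℤ) := by
          rw [hx]; push_cast; ring
        have m1 : x % ((2:ℤ) ^ 2 ^ (K+1)) = (r:ℤ) % ((2:ℤ) ^ 2 ^ (K+1)) := by
          rw [hrcast, Int.emod_emod_of_dvd _ dvd_rfl]
        have m2 : (x + ((t*q : ℕ):ℤ)) % ((2:ℤ) ^ 2 ^ (K+1))
            = ((r:ℤ) + ((t*q : ℕ):ℤ)) % ((2:ℤ) ^ 2 ^ (K+1)) := Int.ModEq.add_right _ m1
        rw [hx', m2, hQZ]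
        have : ((r:ℤ) + ((t*q : ℕ):ℤ)) = (((r + t*q : ℕ)):ℤ) := by push_cast; ring
        rw [this, ← Int.natCast_mod, hnat]
      have hr' : (((a + t * q : ℕ):ℤ) + b i) % ((2:ℤ) ^ 2 ^ (K+1)) = ((w*q + v : ℕ) : ℤ) := hmodeq
      have htn : ((((a + t * q : ℕ):ℤ) + b i) % ((2:ℤ) ^ 2 ^ (K+1))).toNat = w*q + v := by
        rw [hr']
        exact Int.toNat_natCast _
      rcases Nat.lt_or_ge k K with hkK | hkK
      · -- inherited blocks
        obtain ⟨j, hj1, hj2, hj3⟩ := ha_bits i k hkK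
        refine ⟨j, hj1, hj2, ?_⟩
        rw [htn]
        have hjK : j < 2 ^ K := lt_of_lt_of_le hj2 (Nat.pow_le_pow_right (by norm_num) hkK)
        have e1 : (w*q + v).testBit j = ((w*q + v) % 2 ^ 2 ^ K).testBit j := by
          rw [Nat.testBit_mod_two_pow]
          simp [hjK]
        have e2 : (w*q + v) % q = v := by
          rw [mul_comm w q, Nat.mul_add_mod]
          exact Nat.mod_eq_of_lt hvq
        have e3 : v = ((x % (2:ℤ) ^ 2 ^ K).toNat) := by
          rw [hvdef, hrdef, hqdef]
          exact aux_toNat_emod x (Nat.pow_le_pow_right (by norm_num) (Nat.le_succ K))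
        rw [e1]
        rw [show ((2:ℕ) ^ 2 ^ K) = q from rfl, e2, e3]
        exact hj3
      · -- the new block k = K
        have hkK' : k = K := by omega
        rw [hkK']
        obtain ⟨j0, hj0, hbit⟩ := aux_exists_zero_bit (hwq.trans_le (le_of_eq hqdef))
          (by rw [← hqdef] at *; exact ht_good i)
        refine ⟨2^K + j0, Nat.le_add_right _ _, ?_, ?_⟩
        · have : 2^(K+1) = 2^K + 2^K := by rw [pow_succ]; ring
          omega
        · rw [htn]
          have := aux_testBit_high (w := w) (v := v) (e := 2^K) (j := j0)
            (by rw [← hqdef]; exact hvq)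
          rw [show ((2:ℕ) ^ 2 ^ K) = q from rfl] at this
          rw [this, hbit]
          simp

theorem stmt_5 (n : ℕ) (hn : 1 ≤ n) (b : Fin n → ℤ)
    (hb : ∀ i : Fin n, (2 ^ (n + 1) : ℤ) ∣ b i) :
    ∃ a : ℤ, ∀ i : Fin n,
      0 ≤ a + b i ∧ (a + b i).toNat ∈ setA := by
  classical
  set B : ℕ := ∑ i, (b i).natAbs with hB
  have hBb : ∀ i, (b i).natAbs ≤ B := by
    intro i
    rw [hB]
    exact Finset.single_le_sum (f := fun i => (b i).natAbs)
      (fun _ _ => Nat.zero_le _) (Finset.mem_univ i)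
  have hBZ : ∀ i, |b i| ≤ (B:ℤ) := by
    intro i
    rw [Int.abs_eq_natAbs]
    exact_mod_cast hBb i
  set K1 : ℕ := 2*B + n + 1 with hK1def
  obtain ⟨a, ha_lt, ha_dvd, ha_bits⟩ := aux_key n b hb K1
  set q : ℕ := 2 ^ 2 ^ K1 with hqdef
  have hq0 : 0 < q := by positivity
  have hqK : K1 < q := by
    calc K1 < 2 ^ K1 := Nat.lt_two_pow_self
      _ ≤ 2 ^ 2 ^ K1 := Nat.pow_le_pow_right (by norm_num) (Nat.lt_two_pow_self (n := K1)).le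
  have hqB : 2*B + 1 < q := by omega
  have hK11 : 1 ≤ K1 := by omega
  -- choose the final shift c ∈ {0, q}
  obtain ⟨c, hcq, hm⟩ : ∃ c : ℤ, c % ((q:ℕ):ℤ) = 0 ∧
      ∀ i, 0 ≤ (a:ℤ) + b i + c ∧ (a:ℤ) + b i + c < 2*q := by
    by_cases hall : ∀ i, (a:ℤ) + b i < (q:ℤ)
    · refine ⟨(q:ℤ), Int.emod_self, fun i => ⟨?_, ?_⟩⟩
      · have h1 := (abs_le.mp (hBZ i)).1
        have h2 : (0:ℤ) ≤ (a:ℤ) := Int.natCast_nonneg a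
        have h3 : (2*B + 1 : ℤ) < q := by exact_mod_cast hqB
        linarith
      · have := hall i
        linarith
    · push_neg at hall
      obtain ⟨i0, hi0⟩ := hall
      refine ⟨0, Int.zero_emod _, fun i => ⟨?_, ?_⟩⟩
      · have h1 := (abs_le.mp (hBZ i)).1
        have h2 := (abs_le.mp (hBZ i0)).2
        have h3 : (2*B + 1 : ℤ) < q := by exact_mod_cast hqB
        have h4 : (a:ℤ) + b i = ((a:ℤ) + b i0) + (b i - b i0) := by ring
        linarith
      · have h1 := (abs_le.mp (hBZ i)).2
        have h2 : ((a:ℕ):ℤ) < ((q:ℕ):ℤ) := by exact_mod_cast ha_lt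
        have h3 : (2*B + 1 : ℤ) < q := by exact_mod_cast hqB
        linarith
  refine ⟨(a:ℤ) + c, fun i => ⟨?_, ?_⟩⟩
  · have := (hm i).1
    linarith
  · intro k
    set m : ℤ := (a:ℤ) + c + b i with hmdef
    have hm1 : m = (a:ℤ) + b i + c := by rw [hmdef]; ring
    have hmnn : 0 ≤ m := by rw [hm1]; exact (hm i).1
    have hmlt : m < 2*q := by rw [hm1]; exact (hm i).2
    have hmtn : (m.toNat : ℤ) = m := Int.toNat_of_nonneg hmnn
    have hmtn2 : m.toNat < 2 * q := by exact_mod_cast hmtn ▸ hmlt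
    rcases Nat.lt_or_ge k K1 with hk | hk
    · obtain ⟨j, hj1, hj2, hj3⟩ := ha_bits i k hk
      refine ⟨j, hj1, hj2, ?_⟩
      have hje : j < 2 ^ K1 :=
        lt_of_lt_of_le hj2 (Nat.pow_le_pow_right (by norm_num) hk)
      rw [aux_testBit_toNat hmnn j hje]
      have hmq : m % (2:ℤ)^(2^K1) = ((a:ℤ) + b i) % (2:ℤ)^(2^K1) := by
        have hq' : ((q:ℕ):ℤ) = (2:ℤ)^(2^K1) := by rw [hqdef]; push_cast; ring
        rw [hm1, Int.add_emod, ← hq', hcq]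
        simp [Int.emod_emod_of_dvd]
      rw [hmq]
      exact hj3
    · have hsmall : m.toNat < 2 ^ (2^K1 + 1) := by
        have : (2:ℕ) ^ (2^K1 + 1) = 2 * q := by rw [hqdef, pow_succ]; ring
        omega
      rcases eq_or_lt_of_le hk with hkeq | hklt
      · refine ⟨2^K1 + 1, ?_, ?_, ?_⟩
        · rw [← hkeq]; omega
        · rw [← hkeq]
          have : 2^(K1+1) = 2^K1 + 2^K1 := by rw [pow_succ]; ring
          have h2 : 2 ≤ 2^K1 := by
            calc (2:ℕ) = 2^1 := rfl
              _ ≤ 2^K1 := Nat.pow_le_pow_right (by norm_num) hK11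
          omega
        · rw [Nat.testBit_lt_two_pow hsmall]
          simp
      · refine ⟨2^k, le_rfl, ?_, ?_⟩
        · have : 2^(k+1) = 2^k + 2^k := by rw [pow_succ]; ring
          have : 0 < 2 ^ k := by positivity
          omega
        · have hjk : 2^K1 + 1 ≤ 2^k := by
            have h1 : 2^(K1+1) ≤ 2^k := Nat.pow_le_pow_right (by norm_num) hklt
            have h2 : 2^(K1+1) = 2^K1 + 2^K1 := by rw [pow_succ]; ring
            have h3 : 1 ≤ 2^K1 := Nat.one_le_two_pow
            omega
          have : m.toNat < 2^(2^k) :=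
            lt_of_lt_of_le hsmall (Nat.pow_le_pow_right (by norm_num) hjk)
          rw [Nat.testBit_lt_two_pow this]
          simp
end

section
/- The set A, viewed as a subset of ℤ, is a J-set of the additive group (ℤ, +): for every finite set F of sequences f : ℕ → ℤ there exist m ≥ 1, natural numbers t(1) < t(2) < … < t(m), and a ∈ ℤ such that for every f ∈ F, the integer a + f(t(1)) + f(t(2)) + … + f(t(m)) is nonnegative and belongs to A. -/
/-- `X ⊆ ℤ` is a J-set of `(ℤ, +)`: for every finite set `F` of sequences `ℕ → ℤ`,
there are `m ≥ 1`, `t(1) < … < t(m)` in `ℕ` and `a ∈ ℤ` with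
`a + ∑_{j=1}^m f(t(j)) ∈ X` for every `f ∈ F`. -/
def IntJSet (X : Set ℤ) : Prop :=
  ∀ F : Finset (ℕ → ℤ), ∃ m : ℕ, 1 ≤ m ∧ ∃ t : Fin m → ℕ, StrictMono t ∧
    ∃ a : ℤ, ∀ f ∈ F, a + ∑ j : Fin m, f (t j) ∈ X

/-- A number `< 2^w` all of whose first `w` bits are one equals `2^w - 1`. -/
lemma allOnes {w q : ℕ} (hq : q < 2 ^ w) (h : ∀ i < w, q.testBit i = true) : q = 2 ^ w - 1 := by
  apply Nat.eq_of_testBit_eq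
  intro i
  rw [Nat.testBit_two_pow_sub_one]
  rcases lt_or_ge i w with hi | hi
  · simp [h i hi, hi]
  · have h2 : q < 2 ^ i := lt_of_lt_of_le hq (Nat.pow_le_pow_right (by norm_num) hi)
    have h3 : ¬ i < w := by omega
    simp [Nat.testBit_lt_two_pow h2, h3]

/-- Adding a multiple of `2^L` does not change bits below `L`. -/
lemma testBit_add_mul_pow {a c L p : ℕ} (hp : p < L) :
    (a + c * 2 ^ L).testBit p = a.testBit p := by
  have h1 : (a + c * 2 ^ L).testBit p = ((a + c * 2 ^ L) % 2 ^ L).testBit p := by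
    rw [Nat.testBit_mod_two_pow]; simp [hp]
  have h2 : a.testBit p = (a % 2 ^ L).testBit p := by
    rw [Nat.testBit_mod_two_pow]; simp [hp]
  rw [h1, h2, Nat.add_mul_mod_self_right]

lemma testBit_two_pow_mul_low {x p G : ℕ} (h : p < G) :
    (2 ^ G * x).testBit p = false := by
  have h2 : ¬ p ≥ G := by omega
  rw [mul_comm, ← Nat.shiftLeft_eq, Nat.testBit_shiftLeft]
  simp [h2]

lemma testBit_two_pow_mul_high (x p G : ℕ) :
    (2 ^ G * x).testBit (p + G) = x.testBit p := by
  have h2 : p + G ≥ G := by omega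
  rw [mul_comm, ← Nat.shiftLeft_eq, Nat.testBit_shiftLeft]
  simp [h2]

/-- Greedy construction: after `n` steps we have `z` handling the windows
`[2^k - 2^j0, 2^(k+1) - 2^j0)` for `j0 ≤ k < j0 + n`, for all `d` in `DS`. -/
lemma greedy_aux (DS : Finset ℕ) (j0 : ℕ) (hcard : DS.card < 2 ^ 2 ^ j0) (n : ℕ) :
    ∃ z : ℕ, z < 2 ^ (2 ^ (j0 + n) - 2 ^ j0) ∧
      ∀ d ∈ DS, ∀ k, j0 ≤ k → k < j0 + n →
        ∃ p, 2 ^ k - 2 ^ j0 ≤ p ∧ p < 2 ^ (k + 1) - 2 ^ j0 ∧ (z + d).testBit p = false := by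
  induction n with
  | zero =>
    exact ⟨0, by simp, fun d _ k h1 h2 => absurd (lt_of_le_of_lt h1 h2) (by omega)⟩
  | succ n ih =>
    obtain ⟨z, hz, hwin⟩ := ih
    set L := 2 ^ (j0 + n) - 2 ^ j0 with hLdef
    set W := 2 ^ 2 ^ (j0 + n) with hWdef
    have hWpos : 0 < W := pow_pos (by norm_num) _
    have hLpos : (0:ℕ) < 2 ^ L := pow_pos (by norm_num) _
    have hj0n : (2:ℕ) ^ j0 ≤ 2 ^ (j0 + n) := Nat.pow_le_pow_right (by norm_num) (by omega)
    set bad : ℕ → ℕ := fun d => (W - 1) - ((z + d) / 2 ^ L) % W with hbad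
    have hbadcard : (DS.image bad).card < (Finset.range W).card := by
      rw [Finset.card_range]
      calc (DS.image bad).card ≤ DS.card := Finset.card_image_le
        _ < 2 ^ 2 ^ j0 := hcard
        _ ≤ W := Nat.pow_le_pow_right (by norm_num) hj0n
    have hex : ∃ c ∈ Finset.range W, c ∉ DS.image bad := by
      by_contra hcon
      push_neg at hcon
      exact absurd (Finset.card_le_card hcon) (not_le.mpr hbadcard)
    obtain ⟨c, hcR, hcB⟩ := hex
    have hcW : c < W := Finset.mem_range.mp hcR
    refine ⟨z + c * 2 ^ L, ?_, ?_⟩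
    · have hexp : 2 ^ (j0 + (n+1)) - 2 ^ j0 = 2 ^ (j0 + n) + L := by
        have h2 : 2 ^ (j0 + (n+1)) = 2 * 2 ^ (j0 + n) := by
          rw [show j0 + (n+1) = (j0 + n) + 1 by omega, pow_succ]; ring
        omega
      rw [hexp, pow_add]
      calc z + c * 2 ^ L < 2 ^ L + c * 2 ^ L := by omega
        _ = (c + 1) * 2 ^ L := by ring
        _ ≤ W * 2 ^ L := Nat.mul_le_mul_right _ (by omega)
        _ = 2 ^ 2 ^ (j0 + n) * 2 ^ L := rfl
    · intro d hd k hk1 hk2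
      rcases lt_or_eq_of_le (by omega : k ≤ j0 + n) with hklt | hkeq
      · obtain ⟨p, h1, h2, h3⟩ := hwin d hd k hk1 hklt
        have hpL : p < L := by
          have : (2:ℕ) ^ (k+1) ≤ 2 ^ (j0 + n) := Nat.pow_le_pow_right (by norm_num) (by omega)
          omega
        refine ⟨p, h1, h2, ?_⟩
        rw [show z + c * 2 ^ L + d = (z + d) + c * 2 ^ L by ring,
          testBit_add_mul_pow hpL, h3]
      · subst hkeq
        by_contra hcon
        push_neg at hcon
        have hall : ∀ p, 2 ^ (j0+n) - 2 ^ j0 ≤ p → p < 2 ^ (j0+n+1) - 2 ^ j0 →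
            (z + c * 2 ^ L + d).testBit p = true := by
          intro p hp1 hp2
          have := hcon p hp1 (by rw [show j0 + n + 1 = j0 + (n+1) by omega]; exact hp2)
          revert this
          cases (z + c * 2 ^ L + d).testBit p <;> simp
        -- the window is [L, L + 2^(j0+n))
        have hwineq : 2 ^ (j0+n+1) - 2 ^ j0 = L + 2 ^ (j0+n) := by
          have h2 : 2 ^ (j0+n+1) = 2 * 2 ^ (j0+n) := by rw [pow_succ]; ring
          omega
        have hqW : (z + c * 2 ^ L + d) / 2 ^ L % W < W := Nat.mod_lt _ hWpos
        have hqbits : ∀ i < 2 ^ (j0+n),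
            ((z + c * 2 ^ L + d) / 2 ^ L % W).testBit i = true := by
          intro i hi
          rw [Nat.testBit_mod_two_pow]
          have hdivbit : ((z + c * 2 ^ L + d) / 2 ^ L).testBit i
              = (z + c * 2 ^ L + d).testBit (L + i) := by
            rw [← Nat.shiftRight_eq_div_pow, Nat.testBit_shiftRight]
          rw [hdivbit, hall (L + i) (by omega) (by omega)]
          simp [hi]
        have hqall : (z + c * 2 ^ L + d) / 2 ^ L % W = W - 1 := allOnes hqW hqbits
        have hdiv : (z + c * 2 ^ L + d) / 2 ^ L = (z + d) / 2 ^ L + c := by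
          rw [show z + c * 2 ^ L + d = (z + d) + c * 2 ^ L by ring,
            Nat.add_mul_div_right _ _ hLpos]
        have hq0W : (z + d) / 2 ^ L % W < W := Nat.mod_lt _ hWpos
        have hqeq : ((z + d) / 2 ^ L % W + c) % W = W - 1 := by
          rw [Nat.mod_add_mod, ← hdiv, hqall]
        have hc_eq : c = (W - 1) - (z + d) / 2 ^ L % W := by
          rcases lt_or_ge ((z + d) / 2 ^ L % W + c) W with h' | h'
          · rw [Nat.mod_eq_of_lt h'] at hqeq; omega
          · have hlt : (z + d) / 2 ^ L % W + c - W < W := by omega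
            rw [Nat.mod_eq_sub_mod h', Nat.mod_eq_of_lt hlt] at hqeq
            omega
        exact hcB (Finset.mem_image.mpr ⟨d, hd, hc_eq.symm⟩)

lemma greedy (DS : Finset ℕ) (j0 : ℕ) (hcard : DS.card < 2 ^ 2 ^ j0) :
    ∃ z : ℕ, ∀ d ∈ DS, ∀ k, j0 ≤ k →
      ∃ p, 2 ^ k - 2 ^ j0 ≤ p ∧ p < 2 ^ (k + 1) - 2 ^ j0 ∧ (z + d).testBit p = false := by
  classical
  set D := DS.sup id with hD
  obtain ⟨z, hz, hwin⟩ := greedy_aux DS j0 hcard (D + 1)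
  set L := 2 ^ (j0 + (D + 1)) - 2 ^ j0 with hL
  refine ⟨z, fun d hd k hk => ?_⟩
  rcases lt_or_ge k (j0 + (D + 1)) with h | h
  · exact hwin d hd k hk h
  · have hdD : d ≤ D := Finset.le_sup (f := id) hd
    have hj0 : (1:ℕ) ≤ 2 ^ j0 := Nat.one_le_two_pow
    have hj01 : (2:ℕ) ^ j0 ≤ 2 ^ (j0 + (D+1)) := Nat.pow_le_pow_right (by norm_num) (by omega)
    have hLD : D + 1 ≤ L := by
      have h2 : D + 1 < 2 ^ (D+1) := Nat.lt_two_pow_self (n := D+1)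
      have hsub : (2 ^ j0 - 1) + 1 = 2 ^ j0 := Nat.sub_add_cancel hj0
      have e1 : 2 ^ (j0 + (D+1)) = ((2 ^ j0 - 1) + 1) * 2 ^ (D+1) := by
        rw [hsub, ← pow_add]
      have e2 : ((2 ^ j0 - 1) + 1) * 2 ^ (D+1) = (2 ^ j0 - 1) * 2 ^ (D+1) + 2 ^ (D+1) := by
        ring
      have e3 : (2 ^ j0 - 1) * 1 ≤ (2 ^ j0 - 1) * 2 ^ (D+1) :=
        Nat.mul_le_mul_left _ Nat.one_le_two_pow
      omega
    have hDL : D < 2 ^ L :=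
      lt_of_lt_of_le (lt_of_lt_of_le (by omega : D < D + 1) hLD) (Nat.le_of_lt (Nat.lt_two_pow_self (n := L)))
    have hzd : z + d < 2 ^ (L + 1) := by
      have : (2:ℕ) ^ (L+1) = 2 * 2 ^ L := by rw [pow_succ]; ring
      omega
    have hGk : (2:ℕ) ^ j0 ≤ 2 ^ k := Nat.pow_le_pow_right (by norm_num) hk
    have hkk : (2:ℕ) ^ (k+1) = 2 * 2 ^ k := by rw [pow_succ]; ring
    have hkL : (2:ℕ) ^ (j0 + (D+1) + 1) ≤ 2 ^ (k + 1) := Nat.pow_le_pow_right (by norm_num) (by omega)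
    have hbig : (2:ℕ) ^ (j0 + (D+1) + 1) = 2 * 2 ^ (j0 + (D+1)) := by rw [pow_succ]; ring
    refine ⟨2 ^ (k+1) - 2 ^ j0 - 1, by omega, by omega, ?_⟩
    apply Nat.testBit_lt_two_pow
    calc z + d < 2 ^ (L + 1) := hzd
      _ ≤ 2 ^ (2 ^ (k+1) - 2 ^ j0 - 1) := Nat.pow_le_pow_right (by norm_num) (by omega)

theorem stmt_6 : IntJSet (((↑) : ℕ → ℤ) '' setA) := by
  classical
  intro F
  rcases F.eq_empty_or_nonempty with hF | hF
  · subst hF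
    refine ⟨1, le_refl 1, fun _ => 0, ?_, 0, by simp⟩
    intro i j hij
    have hi := i.isLt; have hj := j.isLt
    have := Fin.lt_def.mp hij
    omega
  · set r := F.card with hr
    set j0 := r + 1 with hj0
    set G := 2 ^ j0 with hG
    set M := 2 ^ G with hM
    haveI : NeZero M := ⟨pow_ne_zero _ two_ne_zero⟩
    set φ : ℕ → (F → ZMod M) := fun n => fun f => (((f : ℕ → ℤ) n : ℤ) : ZMod M) with hφ
    obtain ⟨ρ, hρ⟩ := Finite.exists_infinite_fiber φ
    have hp : {n : ℕ | φ n = ρ}.Infinite := by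
      have hpre : φ ⁻¹' {ρ} = {n : ℕ | φ n = ρ} := by
        ext n; simp
      rw [← hpre, ← Set.infinite_coe_iff]
      exact hρ
    set t0 : ℕ → ℕ := Nat.nth (fun n => φ n = ρ) with ht0
    have hmono : StrictMono t0 := Nat.nth_strictMono hp
    have hmem : ∀ n, φ (t0 n) = ρ := fun n => Nat.nth_mem_of_infinite hp n
    set t : Fin M → ℕ := fun j => t0 j.val with ht
    have htmono : StrictMono t := fun i j hij => hmono (Fin.lt_def.mp hij)
    set s : (ℕ → ℤ) → ℤ := fun f => ∑ j : Fin M, f (t j) with hs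
    have hdvd : ∀ f ∈ F, (M : ℤ) ∣ s f := by
      intro f hf
      rw [← ZMod.intCast_zmod_eq_zero_iff_dvd]
      have hcast : ((s f : ℤ) : ZMod M) = ∑ j : Fin M, (((f (t j) : ℤ)) : ZMod M) := by
        rw [hs]; push_cast; rfl
      rw [hcast]
      have hconst : ∀ j : Fin M, (((f (t j) : ℤ)) : ZMod M) = ρ ⟨f, hf⟩ := by
        intro j
        have := congrFun (hmem j.val) ⟨f, hf⟩
        exact this
      rw [Finset.sum_congr rfl (fun j _ => hconst j), Finset.sum_const,
        Finset.card_univ, Fintype.card_fin, nsmul_eq_mul, ZMod.natCast_self, zero_mul]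
    set w : (ℕ → ℤ) → ℤ := fun f => s f / (M : ℤ) with hw
    have hws : ∀ f ∈ F, (M : ℤ) * w f = s f := fun f hf => Int.mul_ediv_cancel' (hdvd f hf)
    set μ := F.inf' hF w with hμ
    set dd : (ℕ → ℤ) → ℕ := fun f => (w f - μ).toNat with hdd
    have hddval : ∀ f ∈ F, (dd f : ℤ) = w f - μ := fun f hf =>
      Int.toNat_of_nonneg (sub_nonneg.mpr (Finset.inf'_le w hf))
    set DS := F.image dd with hDS
    have hcard : DS.card < 2 ^ 2 ^ j0 := by
      calc DS.card ≤ F.card := Finset.card_image_le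
        _ < 2 ^ r := Nat.lt_two_pow_self (n := r)
        _ ≤ 2 ^ 2 ^ j0 := Nat.pow_le_pow_right (by norm_num)
            (le_trans (Nat.le_of_lt (Nat.lt_two_pow_self (n := r))) (Nat.pow_le_pow_right (by norm_num) (by omega)))
    obtain ⟨z, hz⟩ := greedy DS j0 hcard
    refine ⟨M, Nat.one_le_two_pow, t, htmono, (M : ℤ) * ((z : ℤ) - μ), ?_⟩
    intro f hf
    have key : (M : ℤ) * ((z : ℤ) - μ) + ∑ j : Fin M, f (t j) = ((M * (z + dd f) : ℕ) : ℤ) := by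
      have h1 : (∑ j : Fin M, f (t j)) = s f := rfl
      rw [h1, ← hws f hf]
      have h2 : ((dd f : ℕ) : ℤ) = w f - μ := hddval f hf
      push_cast
      rw [h2]
      ring
    rw [key]
    refine ⟨M * (z + dd f), ?_, rfl⟩
    intro k
    rcases lt_or_ge k j0 with hk | hk
    · refine ⟨2 ^ k, le_refl _, ?_, ?_⟩
      · have : (2:ℕ) ^ (k+1) = 2 * 2 ^ k := by rw [pow_succ]; ring
        have : (0:ℕ) < 2 ^ k := pow_pos (by norm_num) _
        omega
      · have hkG : 2 ^ k < G := by
          rw [hG]; exact Nat.pow_lt_pow_right (by norm_num) hk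
        rw [hM, testBit_two_pow_mul_low hkG]
        simp
    · obtain ⟨p, h1, h2, h3⟩ := hz (dd f) (Finset.mem_image_of_mem dd hf) k hk
      have hGk : G ≤ 2 ^ k := by rw [hG]; exact Nat.pow_le_pow_right (by norm_num) hk
      have hk1 : G ≤ 2 ^ (k+1) := le_trans hGk (Nat.pow_le_pow_right (by norm_num) (by omega))
      refine ⟨p + G, by omega, by omega, ?_⟩
      rw [hM, testBit_two_pow_mul_high, h3]
      simp
end

section
/- The set A, viewed as a subset of ℤ, is a J-set of the additive group (ℤ, +) but is not piecewise syndetic in (ℤ, +). -/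
/-- If `y % 2^L ≠ 2^L - 1` then some bit of `y` below `L` is zero. -/
lemma bit_of_mod_ne {L y : ℕ} (h : y % 2 ^ L ≠ 2 ^ L - 1) :
    ∃ j, j < L ∧ y.testBit j = false := by
  by_contra hc
  push_neg at hc
  apply h
  apply Nat.eq_of_testBit_eq
  intro i
  rw [Nat.testBit_mod_two_pow, Nat.testBit_two_pow_sub_one]
  by_cases hi : i < L
  · have := hc i hi
    simp only [ne_eq, Bool.not_eq_false] at this
    simp [hi, this]
  · simp [hi]

/-- Membership criterion for `setA` after scaling by `2^(2^(K+1))`: it suffices that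
no base-`2^(2^(K+1))` digit of `x` is maximal. -/
lemma mul_mem_setA (K x : ℕ)
    (h : ∀ i : ℕ, x / (2 ^ 2 ^ (K + 1)) ^ i % 2 ^ 2 ^ (K + 1) ≠ 2 ^ 2 ^ (K + 1) - 1) :
    ∀ k : ℕ, ∃ i : ℕ, 2 ^ k ≤ i ∧ i < 2 ^ (k + 1) ∧ ¬ (2 ^ 2 ^ (K + 1) * x).testBit i := by
  set L := 2 ^ (K + 1) with hL
  intro k
  by_cases hk : k ≤ K
  · refine ⟨2 ^ k, le_refl _, Nat.pow_lt_pow_right one_lt_two (Nat.lt_succ_self k), ?_⟩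
    rw [mul_comm, ← Nat.shiftLeft_eq, Nat.testBit_shiftLeft]
    have h1 : 2 ^ k < L := Nat.pow_lt_pow_right one_lt_two (by omega)
    simp only [ge_iff_le]
    have : ¬ (L ≤ 2 ^ k) := by omega
    simp [this]
  · push_neg at hk
    set m := 2 ^ (k - (K + 1)) with hm
    have hm1 : 1 ≤ m := Nat.one_le_two_pow
    have hL1 : 1 ≤ L := Nat.one_le_two_pow
    have hmL : m * L = 2 ^ k := by
      rw [hm, hL, ← pow_add]; congr 1; omega
    obtain ⟨j, hj, hjf⟩ := bit_of_mod_ne (L := L) (y := x / (2 ^ L) ^ (m - 1)) (h (m - 1))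
    have hLmL : L ≤ m * L := Nat.le_mul_of_pos_left L (by omega)
    refine ⟨m * L + j, by omega, ?_, ?_⟩
    · have : 2 ^ (k + 1) = 2 * (m * L) := by rw [hmL, pow_succ]; ring
      omega
    · have e1 : (2 ^ L : ℕ) ^ (m - 1) = 2 ^ ((m - 1) * L) := by
        rw [← pow_mul, mul_comm]
      have e2 : x.testBit ((m - 1) * L + j) = false := by
        rw [← Nat.testBit_shiftRight, Nat.shiftRight_eq_div_pow, ← e1]
        exact hjf
      rw [mul_comm, ← Nat.shiftLeft_eq, Nat.testBit_shiftLeft]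
      have : m * L + j - L = (m - 1) * L + j := by
        have : (m - 1) * L = m * L - L := by
          rw [Nat.sub_mul, one_mul]
        omega
      rw [this, e2]
      simp

/-- Greedy digit construction: a common translate of a finite set of integers into the
set of naturals all of whose base-`M` digits are non-maximal. -/
lemma digit_avoid (M : ℕ) (hM : 3 ≤ M) (U : Finset ℤ) (hU : U.card < M) :
    ∃ a : ℤ, ∀ u ∈ U, ∃ n : ℕ, (n : ℤ) = a + u ∧ ∀ i : ℕ, n / M ^ i % M ≠ M - 1 := by
  have hMpos : 0 < M := by omega
  set C : ℕ := U.sup Int.natAbs with hC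
  set b : ℤ → ℕ := fun u => ((C : ℤ) + u).toNat with hbdef
  have hb : ∀ u ∈ U, ((b u : ℤ)) = (C : ℤ) + u := by
    intro u hu
    have h1 : u.natAbs ≤ C := Finset.le_sup hu
    have h3 : -(u.natAbs : ℤ) ≤ u := by rw [← Int.abs_eq_natAbs]; exact neg_abs_le u
    have h4 : (u.natAbs : ℤ) ≤ C := by exact_mod_cast h1
    exact Int.toNat_of_nonneg (by omega)
  have key : ∀ j : ℕ, ∃ w : ℕ, w < M ^ j ∧
      ∀ u ∈ U, ∀ i, i < j → (w + b u) / M ^ i % M ≠ M - 1 := by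
    intro j
    induction j with
    | zero => exact ⟨0, by simp, by intro u hu i hi; omega⟩
    | succ j ih =>
      obtain ⟨w, hw, hdig⟩ := ih
      set g : ℤ → ℕ := fun u => (w + b u) / M ^ j % M with hgdef
      set bad : ℤ → ℕ := fun u => (M - 1 + (M - g u)) % M with hbaddef
      have hex : ∃ d, d ∈ Finset.range M ∧ d ∉ U.image bad := by
        by_contra hcon
        push_neg at hcon
        have hsub : Finset.range M ⊆ U.image bad := fun d hd => hcon d hd
        have h1 := Finset.card_le_card hsub
        have h2 := Finset.card_image_le (f := bad) (s := U)
        simp only [Finset.card_range] at h1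
        omega
      obtain ⟨d, hdr, hdn⟩ := hex
      rw [Finset.mem_range] at hdr
      refine ⟨w + d * M ^ j, ?_, ?_⟩
      · have hd2 : d * M ^ j ≤ (M - 1) * M ^ j := Nat.mul_le_mul_right _ (by omega)
        have e : (M - 1) * M ^ j = M * M ^ j - M ^ j := by rw [Nat.sub_mul, one_mul]
        have le : M ^ j ≤ M * M ^ j := Nat.le_mul_of_pos_left _ hMpos
        have hpow : M ^ (j + 1) = M * M ^ j := by rw [pow_succ, mul_comm]
        omega
      · intro u hu i hij
        rcases Nat.lt_or_ge i j with hij' | hij'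
        · -- lower digits unchanged
          have hpp : M ^ (j - i - 1) * M * M ^ i = M ^ j := by
            rw [← pow_succ, ← pow_add]; congr 1; omega
          have harr : w + d * M ^ j + b u = (w + b u) + d * M ^ (j - i - 1) * M * M ^ i := by
            rw [mul_assoc, mul_assoc, ← mul_assoc (M ^ (j - i - 1)), hpp]; ring
          rw [harr, Nat.add_mul_div_right _ _ (pow_pos hMpos i)]
          have : (w + b u) / M ^ i + d * M ^ (j - i - 1) * M
              = (w + b u) / M ^ i + (d * M ^ (j - i - 1)) * M := by ring
          rw [this, Nat.add_mul_mod_self_right]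
          exact hdig u hu i hij'
        · -- the new digit
          have hi : i = j := by omega
          subst hi
          have harr : w + d * M ^ i + b u = (w + b u) + d * M ^ i := by ring
          rw [harr, Nat.add_mul_div_right _ _ (pow_pos hMpos i)]
          intro hcontra
          apply hdn
          have hgu : g u < M := Nat.mod_lt _ hMpos
          have hgu2 : g u = (w + b u) / M ^ i % M := rfl
          have hbadval : bad u = M - 1 - g u := by
            show (M - 1 + (M - g u)) % M = M - 1 - g u
            rw [Nat.mod_eq_sub_mod (by omega), Nat.mod_eq_of_lt (by omega)]
            omega
          have hmod : ((w + b u) / M ^ i + d) % M = (g u + d) % M := by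
            rw [Nat.add_mod, ← hgu2, Nat.mod_eq_of_lt hdr, Nat.add_mod]
          rw [hmod] at hcontra
          have hdval : d = M - 1 - g u := by
            rcases Nat.lt_or_ge (g u + d) M with hlt | hge
            · rw [Nat.mod_eq_of_lt hlt] at hcontra; omega
            · rw [Nat.mod_eq_sub_mod hge, Nat.mod_eq_of_lt (by omega)] at hcontra
              omega
          exact Finset.mem_image.mpr ⟨u, hu, by omega⟩
  set Bb := U.sup b with hBb
  have hBbu : ∀ u ∈ U, b u ≤ Bb := fun u hu => Finset.le_sup hu
  have hpowB : Bb < M ^ Bb := Nat.lt_pow_self (n := Bb) (by omega)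
  obtain ⟨w, hw, hdig⟩ := key Bb
  refine ⟨(w : ℤ) + C, ?_⟩
  intro u hu
  refine ⟨w + b u, ?_, ?_⟩
  · push_cast
    rw [hb u hu]
    ring
  · intro i
    rcases Nat.lt_or_ge i Bb with h | h
    · exact hdig u hu i h
    · have h1 : w + b u < 2 * M ^ Bb := by have := hBbu u hu; omega
      have h2 : (M : ℕ) ^ Bb ≤ M ^ i := Nat.pow_le_pow_right (by omega) h
      have h3 : (w + b u) / M ^ i < 2 := Nat.div_lt_of_lt_mul (by omega)
      have h4 : (w + b u) / M ^ i % M ≤ (w + b u) / M ^ i := Nat.mod_le _ _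
      omega

/-- Pigeonhole: a block of consecutive indices over which all sums of all the
sequences in `F` are divisible by `M`. -/
lemma pigeon (F : Finset (ℕ → ℤ)) (M : ℕ) (hM : 0 < M) :
    ∃ m : ℕ, 1 ≤ m ∧ ∃ t : Fin m → ℕ, StrictMono t ∧
      ∀ f ∈ F, (M : ℤ) ∣ ∑ j : Fin m, f (t j) := by
  haveI : NeZero M := ⟨hM.ne'⟩
  set P : ℕ → ({f // f ∈ F} → ZMod M) :=
    fun n => fun f => ((∑ i ∈ Finset.range n, f.1 i : ℤ) : ZMod M) with hP
  obtain ⟨n₁, n₂, hne, heq⟩ := Finite.exists_ne_map_eq_of_infinite P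
  obtain ⟨p, q, hpq, heq'⟩ : ∃ p q, p < q ∧ P p = P q := by
    rcases lt_or_gt_of_ne hne with h | h
    · exact ⟨n₁, n₂, h, heq⟩
    · exact ⟨n₂, n₁, h, heq.symm⟩
  refine ⟨q - p, by omega, fun j => p + j, ?_, ?_⟩
  · intro a b hab
    simp only []
    exact Nat.add_lt_add_left hab p
  · intro f hf
    have hsum : ∑ j : Fin (q - p), f (p + j) =
        ∑ i ∈ Finset.range q, f i - ∑ i ∈ Finset.range p, f i := by
      rw [Fin.sum_univ_eq_sum_range (fun j => f (p + j)) (q - p),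
        ← Finset.sum_Ico_eq_sum_range, Finset.sum_Ico_eq_sub _ (le_of_lt hpq)]
    rw [hsum, ← ZMod.intCast_zmod_eq_zero_iff_dvd]
    have h1 := congrFun heq' ⟨f, hf⟩
    simp only [hP] at h1
    rw [Int.cast_sub, h1, sub_self]

theorem stmt_7 :
    IntJSet (((↑) : ℕ → ℤ) '' setA) ∧
      ¬ AddPiecewiseSyndetic (((↑) : ℕ → ℤ) '' setA) := by
  constructor
  · -- A is a J-set
    intro F
    set K := F.card with hK
    set M := 2 ^ 2 ^ (K + 1) with hMdef
    have hKpow : 2 ^ K ≤ 2 ^ 2 ^ (K + 1) := by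
      apply Nat.pow_le_pow_right (by norm_num)
      calc K ≤ 2 ^ K := le_of_lt (Nat.lt_two_pow_self (n := K))
        _ ≤ 2 ^ (K + 1) := Nat.pow_le_pow_right (by norm_num) (by omega)
    have hKM : K < M := lt_of_lt_of_le (Nat.lt_two_pow_self (n := K)) hKpow
    have hM3 : 3 ≤ M := by
      have h2 : 2 ≤ 2 ^ (K + 1) := by
        calc 2 = 2 ^ 1 := by norm_num
          _ ≤ 2 ^ (K + 1) := Nat.pow_le_pow_right (by norm_num) (by omega)
      have h3 : 2 ^ 2 ≤ 2 ^ 2 ^ (K + 1) := Nat.pow_le_pow_right (by norm_num) h2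
      omega
    obtain ⟨m, hm, t, ht, hdvd⟩ := pigeon F M (by omega)
    set U : Finset ℤ := F.image (fun f => (∑ j : Fin m, f (t j)) / (M : ℤ)) with hU
    have hUc : U.card < M := lt_of_le_of_lt Finset.card_image_le (by rw [← hK]; exact hKM)
    obtain ⟨a₀, hB⟩ := digit_avoid M hM3 U hUc
    refine ⟨m, hm, t, ht, (M : ℤ) * a₀, ?_⟩
    intro f hf
    obtain ⟨n, hn, hd⟩ := hB ((∑ j : Fin m, f (t j)) / (M : ℤ))
      (Finset.mem_image_of_mem _ hf)
    have hmem : M * n ∈ setA := mul_mem_setA K n hd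
    refine ⟨M * n, hmem, ?_⟩
    have hMu : (M : ℤ) * ((∑ j : Fin m, f (t j)) / (M : ℤ)) = ∑ j : Fin m, f (t j) :=
      Int.mul_ediv_cancel' (hdvd f hf)
    push_cast
    rw [hn, mul_add, hMu]
  · -- A is not piecewise syndetic
    rintro ⟨H, hth⟩
    set R : ℕ := H.sup Int.natAbs with hR
    have hRt : ∀ t ∈ H, t.natAbs ≤ R := fun t ht => Finset.le_sup ht
    set k : ℕ := 2 * R + 2 with hk
    set Q : ℕ := 2 ^ 2 ^ k with hQ
    set Pn : ℕ := 2 ^ 2 ^ (k + 1) with hPn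
    have hQR : 2 * R + 1 < Q := by
      have h1 : k < 2 ^ k := Nat.lt_two_pow_self (n := k)
      have h2 : 2 ^ k ≤ 2 ^ 2 ^ k := Nat.pow_le_pow_right (by norm_num) (le_of_lt h1)
      omega
    have hPQ : Pn = Q * Q := by
      rw [hQ, hPn, ← pow_add]
      congr 1
      rw [pow_succ]
      omega
    have hQpos : 0 < Q := pow_pos two_pos _
    have hPpos : 0 < Pn := pow_pos two_pos _
    have hQP : Q ≤ Pn := by
      rw [hPQ]; exact Nat.le_mul_of_pos_left _ hQpos
    obtain ⟨s, hs⟩ := hth ((Finset.range (Pn + R + 1)).image (fun n : ℕ => (n : ℤ)))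
    set o : ℤ := ((Pn : ℤ) - Q - s) % Pn with ho
    have hPnZ : (0 : ℤ) < (Pn : ℤ) := by exact_mod_cast hPpos
    have ho1 : 0 ≤ o := Int.emod_nonneg _ (by exact_mod_cast hPpos.ne')
    have ho2 : o < Pn := Int.emod_lt_of_pos _ hPnZ
    have hhmem : (o.toNat + R : ℕ) ∈ Finset.range (Pn + R + 1) := by
      rw [Finset.mem_range]; omega
    have hsG := hs ((o.toNat + R : ℕ) : ℤ) (Finset.mem_image_of_mem _ hhmem)
    simp only [Set.mem_iUnion, Set.mem_setOf_eq] at hsG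
    obtain ⟨t, ht, hmem⟩ := hsG
    obtain ⟨z, hzA, hz⟩ := hmem
    have htR : t.natAbs ≤ R := hRt t ht
    have htabs : -(R : ℤ) ≤ t ∧ t ≤ R := by
      have h1 : (t.natAbs : ℤ) ≤ R := by exact_mod_cast htR
      have h2 : -(t.natAbs : ℤ) ≤ t := by rw [← Int.abs_eq_natAbs]; exact neg_abs_le t
      have h3 : t ≤ (t.natAbs : ℤ) := by rw [← Int.abs_eq_natAbs]; exact le_abs_self t
      omega
    set e : ℤ := (R : ℤ) + t with he
    have he1 : 0 ≤ e := by omega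
    have he2 : e ≤ 2 * R := by omega
    have hez : (z : ℤ) = s + o + e := by
      rw [hz]
      push_cast [Int.toNat_of_nonneg ho1]
      ring
    have hoc : ∃ c : ℤ, o = (Pn : ℤ) - Q - s + (Pn : ℤ) * c := by
      refine ⟨-(((Pn : ℤ) - Q - s) / Pn), ?_⟩
      rw [ho, Int.emod_def]
      ring
    obtain ⟨c, hc⟩ := hoc
    have hzmod : (z : ℤ) % Pn = (Pn : ℤ) - Q + e := by
      have hzc : (z : ℤ) = ((Pn : ℤ) - Q + e) + (Pn : ℤ) * c := by
        rw [hez, hc]; ring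
      rw [hzc, Int.add_mul_emod_self_left, Int.emod_eq_of_lt (by omega) (by omega)]
    have hQZ : ((Q : ℤ)) ≤ (Pn : ℤ) := by exact_mod_cast hQP
    have hzmodnat : z % Pn = Pn - Q + e.toNat := by
      have h1 : ((z % Pn : ℕ) : ℤ) = (z : ℤ) % (Pn : ℤ) := by push_cast; ring
      omega
    obtain ⟨i, hi1, hi2, hi3⟩ := hzA k
    apply hi3
    have hb1 : z.testBit i = (z % Pn).testBit i := by
      rw [hPn, Nat.testBit_mod_two_pow]
      simp [hi2]
    have hmul : Q * (Q - 1) = Q * Q - Q := by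
      rw [Nat.mul_sub, mul_one]
    have hval : z % Pn = Q * (Q - 1) + e.toNat := by
      rw [hzmodnat, hPQ]; omega
    have hdiv : (z % Pn) / 2 ^ 2 ^ k = Q - 1 := by
      rw [hval, hQ, Nat.mul_add_div hQpos, Nat.div_eq_of_lt (by omega), add_zero]
    have hbit : (z % Pn).testBit i = true := by
      have hij : i = 2 ^ k + (i - 2 ^ k) := by omega
      rw [hij, ← Nat.testBit_shiftRight, Nat.shiftRight_eq_div_pow, hdiv, hQ,
        Nat.testBit_two_pow_sub_one]
      simp
      omega
    rw [hb1, hbit]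
end

section
/- Let G be a group and X ⊆ G a piecewise syndetic subset of G. Then X is a J-set of G. -/
/-!
Let `H` witness that `X` is piecewise syndetic and colour the words `w : Fin N → F` over the
alphabet `F` by `H`: thickness yields one `s` such that for every word the product
`P w = w₀(0)·w₁(1)·⋯·w_{N-1}(N-1)` satisfies `h·P w·s ∈ X` for some `h ∈ H`, and `w` gets such an
`h` as its colour. For `N` large, the Hales–Jewett theorem gives a monochromatic combinatorial
line `l` of colour `c`, so `c·P (l f)·s ∈ X` for all `f ∈ F`. Absorbing the fixed letters of the
line into the constants `a(i)`, `c·P (l f)·s` is the product from the definition of a J-set,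
with the active coordinates of the line as `t(1) < ⋯ < t(m)`.
-/

/-- `X ⊆ G` is a J-set of the group `G`: for every finite set `F` of sequences
`ℕ → G`, there are `m ≥ 1`, `t(1) < … < t(m)` in `ℕ` and `a(1), …, a(m+1) ∈ G`
such that `a(1)·f(t(1))·a(2)·f(t(2))·⋯·a(m)·f(t(m))·a(m+1) ∈ X` for every `f ∈ F`. -/
def JSet {G : Type*} [Group G] (X : Set G) : Prop :=
  ∀ F : Finset (ℕ → G), ∃ m : ℕ, 1 ≤ m ∧ ∃ t : Fin m → ℕ, StrictMono t ∧
    ∃ a : Fin (m + 1) → G, ∀ f ∈ F,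
      (List.ofFn fun j : Fin m => a j.castSucc * f (t j)).prod * a (Fin.last m) ∈ X

/-- A subset `Y` of a group is thick if every finite set can be (right-)translated
into `Y`. -/
def Thick {G : Type*} [Group G] (Y : Set G) : Prop :=
  ∀ H : Finset G, ∃ s : G, ∀ h ∈ H, h * s ∈ Y

/-- A subset `X` of a group is piecewise syndetic if finitely many (left)
translates of `X` union to a thick set. -/
def PiecewiseSyndetic {G : Type*} [Group G] (X : Set G) : Prop :=
  ∃ H : Finset G, Thick (⋃ t ∈ H, {s : G | t * s ∈ X})

open Combinatorics

theorem Combinatorics.Line.exists_mono_in_high_dimension_fin (α κ : Type*) [Finite α]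
    [Finite κ] : ∃ n, ∀ C : (Fin n → α) → κ, ∃ l : Line α (Fin n), l.IsMono C := by
  obtain ⟨ι, _, hι⟩ := Line.exists_mono_in_high_dimension α κ
  let e := Fintype.equivFin ι
  refine ⟨Fintype.card ι, fun C ↦ ?_⟩
  obtain ⟨l, c, hc⟩ := hι fun v ↦ C (v ∘ e.symm)
  obtain ⟨i, hi⟩ := l.proper
  exact ⟨⟨l.idxFun ∘ e.symm, e i, by simpa using hi⟩, c, hc⟩

section JProduct

variable {G : Type*} [Group G]

def jProduct {m : ℕ} (t : Fin m → ℕ) (a : Fin (m + 1) → G) (x : ℕ → G) : G :=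
  (List.ofFn fun j : Fin m => a j.castSucc * x (t j)).prod * a (Fin.last m)

theorem jProduct_zero (t : Fin 0 → ℕ) (a : Fin 1 → G) (x : ℕ → G) : jProduct t a x = a 0 := by
  simp [jProduct]

theorem jProduct_cons {m : ℕ} (t₀ : ℕ) (t : Fin m → ℕ) (a₀ : G) (a : Fin (m + 1) → G)
    (x : ℕ → G) :
    jProduct (Fin.cons t₀ t) (Fin.cons a₀ a) x = a₀ * x t₀ * jProduct t a x := by
  simp [jProduct, List.ofFn_succ, mul_assoc]

/-- An entry `d j = some g` of the product is the constant `g`, an entry `d j = none` is `x j`. -/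
theorem exists_jProduct_eq (N : ℕ) (d : Fin N → Option G) (pre post : G) :
    ∃ m, ∃ t : Fin m → ℕ, StrictMono t ∧ ∃ a : Fin (m + 1) → G,
      (∀ x, jProduct t a x = pre * (List.ofFn fun j => (d j).getD (x j)).prod * post) ∧
      ((∃ j, d j = none) → 1 ≤ m) := by
  induction N generalizing pre with
  | zero => exact ⟨0, Fin.elim0, fun i ↦ i.elim0, fun _ ↦ pre * post, by simp [jProduct_zero],
      fun ⟨j, _⟩ ↦ j.elim0⟩
  | succ N ih =>
    cases hd : d 0 with
    | some g =>
      obtain ⟨m, t, ht, a, hprod, hm⟩ := ih (fun j ↦ d j.succ) (pre * g)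
      refine ⟨m, fun i ↦ t i + 1, fun i j hij ↦ by simpa using ht hij, a, fun x ↦ ?_, ?_⟩
      · simp only [List.ofFn_succ, List.prod_cons, hd, Option.getD_some, Fin.val_succ]
        rw [← mul_assoc pre]
        exact hprod fun n ↦ x (n + 1)
      · rintro ⟨j, hj⟩
        cases j using Fin.cases with
        | zero => simp [hd] at hj
        | succ j => exact hm ⟨j, hj⟩
    | none =>
      obtain ⟨m, t, ht, a, hprod, -⟩ := ih (fun j ↦ d j.succ) 1
      refine ⟨m + 1, Fin.cons 0 fun i ↦ t i + 1,
        Fin.strictMono_cons.2 ⟨fun _ ↦ Nat.succ_pos _, fun i j hij ↦ by simpa using ht hij⟩,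
        Fin.cons pre a, fun x ↦ ?_, fun _ ↦ Nat.le_add_left 1 m⟩
      rw [jProduct_cons, show jProduct (fun i ↦ t i + 1) a x = _ from hprod fun n ↦ x (n + 1)]
      simp [List.ofFn_succ, hd, mul_assoc]

end JProduct

theorem PiecewiseSyndetic.exists_finset_mul_mem {G : Type*} [Group G] {X : Set G}
    (hX : PiecewiseSyndetic X) :
    ∃ H : Finset G, ∀ S : Finset G, ∃ s, ∀ g ∈ S, ∃ h : H, h * (g * s) ∈ X := by
  obtain ⟨H, hH⟩ := hX
  refine ⟨H, fun S ↦ ?_⟩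
  obtain ⟨s, hs⟩ := hH S
  refine ⟨s, fun g hg ↦ ?_⟩
  obtain ⟨h, hh, hX⟩ := Set.mem_iUnion₂.mp (hs g hg)
  exact ⟨⟨h, hh⟩, hX⟩

theorem stmt_9 {G : Type*} [Group G] (X : Set G) (hX : PiecewiseSyndetic X) :
    JSet X := by
  classical
  intro F
  obtain ⟨H, hH⟩ := hX.exists_finset_mul_mem
  obtain ⟨N, hHJ⟩ := Line.exists_mono_in_high_dimension_fin F H
  let P : (Fin N → F) → G := fun w ↦ (List.ofFn fun j ↦ (w j : ℕ → G) j).prod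
  obtain ⟨s, hs⟩ := hH (Finset.univ.image P)
  choose C hC using fun w ↦ hs (P w) (Finset.mem_image_of_mem P (Finset.mem_univ w))
  obtain ⟨l, c, hc⟩ := hHJ C
  let d : Fin N → Option G := fun j ↦ (l.idxFun j).map fun g : F ↦ g.1 j
  obtain ⟨m, t, ht, a, hprod, hm⟩ := exists_jProduct_eq N d c s
  obtain ⟨i, hi⟩ := l.proper
  refine ⟨m, hm ⟨i, by simp [d, hi]⟩, t, ht, a, fun f hf ↦ ?_⟩
  have hline : P (l ⟨f, hf⟩) = (List.ofFn fun j ↦ (d j).getD (f j)).prod :=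
    congrArg List.prod <| List.ofFn_inj.mpr <| funext fun j ↦
      (Option.getD_map (fun g : F ↦ g.1 j) _ _).symm
  have hmem := hC (l ⟨f, hf⟩)
  rw [hc, hline, ← mul_assoc, ← hprod] at hmem
  exact hmem
end

section
/- For every d ≥ 1, the cardinality of A ∩ {0, 1, …, 2^(2^(d+1)) − 1} equals 2 · ∏_{k=0}^{d} (2^(2^k) − 1). -/
/-- Truncated version as a Finset. -/
def Tset (d : ℕ) : Finset ℕ :=
  (Finset.range (2 ^ 2 ^ (d + 1))).filter fun n =>
    ∀ k < d + 1, ∃ i < 2 ^ (k + 1), 2 ^ k ≤ i ∧ ¬ n.testBit i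

lemma all_ones {b m : ℕ} (hb : b < 2 ^ m) (h : ∀ j < m, b.testBit j) : b = 2 ^ m - 1 := by
  apply Nat.eq_of_testBit_eq
  intro j
  rw [Nat.testBit_two_pow_sub_one]
  by_cases hj : j < m
  · simp [hj, h j hj]
  · simp only [hj, decide_false]
    exact Nat.testBit_eq_false_of_lt
      (lt_of_lt_of_le hb (Nat.pow_le_pow_right (by norm_num) (by omega)))

lemma Tset_card (d : ℕ) : (Tset d).card = 2 * ∏ k ∈ Finset.range (d + 1), (2 ^ 2 ^ k - 1) := by
  induction d with
  | zero => decide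
  | succ d ih =>
    set m : ℕ := 2 ^ (d + 1) with hm
    have hmpos : 0 < 2 ^ m := Nat.pow_pos (by norm_num)
    have hpow : 2 ^ 2 ^ (d + 2) = 2 ^ m * 2 ^ m := by
      rw [← pow_add, hm]; ring_nf
    have hmm : 2 ^ (d + 1 + 1) = m + m := by rw [hm]; ring
    have key : (Tset (d + 1)).card =
        ((Tset d) ×ˢ ((Finset.range (2 ^ m)).erase (2 ^ m - 1))).card := by
      refine Finset.card_nbij' (fun n => (n % 2 ^ m, n / 2 ^ m))
        (fun p => 2 ^ m * p.2 + p.1) ?hi ?hj ?li ?ri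
      case hi =>
        intro n hn
        simp only [Finset.mem_coe, Tset, Finset.mem_filter, Finset.mem_range] at hn
        obtain ⟨hlt, hcond⟩ := hn
        rw [hpow] at hlt
        have hdiv : n / 2 ^ m < 2 ^ m := Nat.div_lt_of_lt_mul (by linarith [hlt])
        have hn_eq : 2 ^ m * (n / 2 ^ m) + n % 2 ^ m = n := Nat.div_add_mod n (2 ^ m)
        simp only [Finset.mem_coe, Finset.mem_product, Finset.mem_erase, Finset.mem_range, Tset,
          Finset.mem_filter]
        refine ⟨⟨Nat.mod_lt _ hmpos, ?_⟩, ?_, hdiv⟩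
        · intro k hk
          obtain ⟨i, hi1, hi2, hi3⟩ := hcond k (by omega)
          have him : i < m := lt_of_lt_of_le hi1 (Nat.pow_le_pow_right (by norm_num) (by omega))
          exact ⟨i, hi1, hi2, by simpa [Nat.testBit_mod_two_pow, him] using hi3⟩
        · -- n / 2^m ≠ 2^m - 1
          obtain ⟨i, hi1, hi2, hi3⟩ := hcond (d + 1) (by omega)
          intro hcontra
          apply hi3
          rw [← hn_eq, Nat.testBit_two_pow_mul_add _ (Nat.mod_lt _ hmpos)]
          rw [hmm] at hi1
          have h1 : ¬ i < m := by omega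
          simp only [h1, if_false, hcontra, Nat.testBit_two_pow_sub_one,
            decide_eq_true_eq]
          omega
      case hj =>
        rintro ⟨a, b⟩ hp
        simp only [Finset.mem_coe, Finset.mem_product, Finset.mem_erase, Finset.mem_range, Tset,
          Finset.mem_filter] at hp ⊢
        obtain ⟨⟨ha, hacond⟩, hbne, hb⟩ := hp
        constructor
        · rw [hpow]
          have ha' : a < 2 ^ m := by rw [hm]; exact ha
          calc 2 ^ m * b + a < 2 ^ m * b + 2 ^ m := by omega
            _ = 2 ^ m * (b + 1) := by ring
            _ ≤ 2 ^ m * 2 ^ m := Nat.mul_le_mul_left _ (by omega)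
        · intro k hk
          by_cases hkd : k < d + 1
          · obtain ⟨i, hi1, hi2, hi3⟩ := hacond k hkd
            have him : i < m := lt_of_lt_of_le hi1 (Nat.pow_le_pow_right (by norm_num) (by omega))
            refine ⟨i, hi1, hi2, ?_⟩
            rw [Nat.testBit_two_pow_mul_add _ ha]
            rw [← hm]
            simpa [him] using hi3
          · have hkd' : k = d + 1 := by omega
            subst hkd'
            have hex : ∃ j < m, ¬ b.testBit j := by
              by_contra hcon
              push_neg at hcon
              exact hbne (all_ones hb (by simpa using hcon))
            obtain ⟨j, hj, hjb⟩ := hex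
            refine ⟨m + j, by omega, by rw [hm]; omega, ?_⟩
            rw [Nat.testBit_two_pow_mul_add _ ha]
            have h1 : ¬ m + j < m := by omega
            rw [← hm]
            simp only [h1, if_false]
            simpa using hjb
      case li =>
        intro n _
        exact Nat.div_add_mod n (2 ^ m)
      case ri =>
        rintro ⟨a, b⟩ hp
        simp only [Finset.mem_coe, Finset.mem_product, Finset.mem_erase, Finset.mem_range, Tset,
          Finset.mem_filter] at hp
        obtain ⟨⟨ha, _⟩, _, hb⟩ := hp
        have ha : a < 2 ^ m := by rw [hm]; exact ha
        have h1 : (2 ^ m * b + a) % 2 ^ m = a := by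
          rw [Nat.mul_add_mod, Nat.mod_eq_of_lt ha]
        have h2 : (2 ^ m * b + a) / 2 ^ m = b := by
          rw [Nat.mul_add_div hmpos, Nat.div_eq_of_lt ha, add_zero]
        simp [h1, h2]
    have hprod := Finset.prod_range_succ (fun k => 2 ^ 2 ^ k - 1) (d + 1)
    rw [key, Finset.card_product, Finset.card_erase_of_mem (by simp [Nat.sub_lt hmpos]),
      Finset.card_range, ih, hprod]
    ring

theorem stmt_10 (d : ℕ) (hd : 1 ≤ d) :
    (setA ∩ Set.Iio (2 ^ 2 ^ (d + 1))).ncard =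
      2 * ∏ k ∈ Finset.range (d + 1), (2 ^ 2 ^ k - 1) := by
  have hset : setA ∩ Set.Iio (2 ^ 2 ^ (d + 1)) = ↑(Tset d) := by
    ext n
    simp only [Set.mem_inter_iff, setA, Set.mem_setOf_eq, Set.mem_Iio,
      Tset, Finset.coe_filter, Finset.mem_coe, Finset.mem_filter, Finset.mem_range]
    constructor
    · rintro ⟨h1, h2⟩
      exact ⟨h2, fun k _ => by obtain ⟨i, a, b, c⟩ := h1 k; exact ⟨i, b, a, c⟩⟩
    · rintro ⟨h2, h1⟩
      refine ⟨fun k => ?_, h2⟩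
      by_cases hk : k < d + 1
      · obtain ⟨i, b, a, c⟩ := h1 k hk
        exact ⟨i, a, b, c⟩
      · refine ⟨2 ^ k, le_refl _,
          by simpa [pow_succ] using Nat.lt_two_mul_self (Nat.pos_pow_of_pos k (by norm_num)), ?_⟩
        have hlt : n < 2 ^ 2 ^ k :=
          lt_of_lt_of_le h2 (Nat.pow_le_pow_right (by norm_num)
            (Nat.pow_le_pow_right (by norm_num) (by omega)))
        simp [Nat.testBit_eq_false_of_lt hlt]
  rw [hset, Set.ncard_coe_finset, Tset_card]
end

section
/- The upper Banach density of A is at least ∏_{k=0}^{∞} (1 − 2^(−2^k)); in particular, the upper Banach density of A is strictly positive. -/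
/-- The upper Banach density of a set `S ⊆ ℕ`:
`limsup_{N → ∞} sup_{x ∈ ℕ} |S ∩ {x, …, x + N - 1}| / N`. -/
noncomputable def upperBanachDensity (S : Set ℕ) : ℝ :=
  Filter.limsup
    (fun N : ℕ => ⨆ x : ℕ, ((S ∩ Set.Ico x (x + N)).ncard : ℝ) / N)
    Filter.atTop

open Finset Filter Real


open scoped Classical in
noncomputable def Cs (d : ℕ) : Finset ℕ :=
  (Finset.range (2 ^ 2 ^ d)).filter
    (fun n => ∀ k < d, ∃ i, 2 ^ k ≤ i ∧ i < 2 ^ (k + 1) ∧ ¬ n.testBit i)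

open scoped Classical in
lemma mem_Cs {d n : ℕ} :
    n ∈ Cs d ↔ n < 2 ^ 2 ^ d ∧ ∀ k < d, ∃ i, 2 ^ k ≤ i ∧ i < 2 ^ (k + 1) ∧ ¬ n.testBit i := by
  simp [Cs]

lemma testBit_high (x m j : ℕ) : x.testBit (m + j) = (x / 2 ^ m).testBit j := by
  rw [← Nat.shiftRight_eq_div_pow, Nat.testBit_shiftRight]

lemma card_Cs_succ (d : ℕ) : (Cs (d + 1)).card = (Cs d).card * (2 ^ 2 ^ d - 1) := by
  have hB : 0 < 2 ^ 2 ^ d := by positivity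
  have hBB : 2 ^ 2 ^ (d + 1) = 2 ^ 2 ^ d * 2 ^ 2 ^ d := by
    rw [pow_succ, pow_mul]; ring
  rw [← Finset.card_range (2 ^ 2 ^ d - 1), ← Finset.card_product]
  apply Finset.card_nbij' (i := fun n => (n % 2 ^ 2 ^ d, n / 2 ^ 2 ^ d))
    (j := fun p => p.1 + 2 ^ 2 ^ d * p.2)
  · intro n hn
    rw [Finset.mem_coe, mem_Cs] at hn
    obtain ⟨hlt, h⟩ := hn
    simp only [Finset.mem_coe, Finset.mem_product, mem_Cs, Finset.mem_range]
    have hdiv : n / 2 ^ 2 ^ d < 2 ^ 2 ^ d := by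
      rw [Nat.div_lt_iff_lt_mul hB]; omega
    refine ⟨⟨Nat.mod_lt _ hB, ?_⟩, ?_⟩
    · intro k hk
      obtain ⟨i, h1, h2, h3⟩ := h k (Nat.lt_succ_of_lt hk)
      have hid : i < 2 ^ d := lt_of_lt_of_le h2 (Nat.pow_le_pow_right (by norm_num) hk)
      refine ⟨i, h1, h2, ?_⟩
      simp [Nat.testBit_mod_two_pow, hid, h3]
    · -- n / B ≠ B - 1
      rcases Nat.lt_or_ge (n / 2 ^ 2 ^ d) (2 ^ 2 ^ d - 1) with h' | h'
      · exact h'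
      exfalso
      have heq : n / 2 ^ 2 ^ d = 2 ^ 2 ^ d - 1 := by omega
      obtain ⟨i, h1, h2, h3⟩ := h d (Nat.lt_succ_self d)
      apply h3
      have : i = 2 ^ d + (i - 2 ^ d) := by omega
      rw [this, testBit_high, heq, Nat.testBit_two_pow_sub_one]
      have : i - 2 ^ d < 2 ^ d := by
        have : 2 ^ (d + 1) = 2 ^ d + 2 ^ d := by ring
        omega
      simpa using this
  · rintro ⟨m, t⟩ hmt
    simp only [Finset.mem_coe, Finset.mem_product, mem_Cs, Finset.mem_range] at hmt
    obtain ⟨⟨hm, h⟩, ht⟩ := hmt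
    rw [Finset.mem_coe, mem_Cs]
    have hmod : (m + 2 ^ 2 ^ d * t) % 2 ^ 2 ^ d = m := by
      rw [Nat.add_mul_mod_self_left, Nat.mod_eq_of_lt hm]
    have hdivq : (m + 2 ^ 2 ^ d * t) / 2 ^ 2 ^ d = t := by
      rw [Nat.add_mul_div_left _ _ hB, Nat.div_eq_of_lt hm, Nat.zero_add]
    constructor
    · have ht1 : t + 1 ≤ 2 ^ 2 ^ d - 1 := by omega
      have hms : 2 ^ 2 ^ d * (t + 1) = 2 ^ 2 ^ d * t + 2 ^ 2 ^ d := by ring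
      calc m + 2 ^ 2 ^ d * t < 2 ^ 2 ^ d * (t + 1) := by omega
        _ ≤ 2 ^ 2 ^ d * (2 ^ 2 ^ d - 1) := Nat.mul_le_mul_left _ ht1
        _ < 2 ^ 2 ^ (d + 1) := by
            rw [hBB]; exact (Nat.mul_lt_mul_left hB).mpr (by omega)
    · intro k hk
      rcases Nat.lt_or_ge k d with hkd | hkd
      · obtain ⟨i, h1, h2, h3⟩ := h k hkd
        have hid : i < 2 ^ d := lt_of_lt_of_le h2 (Nat.pow_le_pow_right (by norm_num) hkd)
        refine ⟨i, h1, h2, ?_⟩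
        intro hbit
        apply h3
        rw [← hmod, Nat.testBit_mod_two_pow]
        simp [hid, hbit]
      · -- k = d
        have hkd' : k = d := by omega
        rw [hkd'] at *
        -- find a zero bit of t below 2^d
        have : ∃ j, j < 2 ^ d ∧ ¬ t.testBit j := by
          by_contra hcon
          push_neg at hcon
          have : t = 2 ^ 2 ^ d - 1 := by
            apply Nat.eq_of_testBit_eq
            intro j
            rcases Nat.lt_or_ge j (2 ^ d) with hj | hj
            · simp [hcon j hj, hj]
            · have : t < 2 ^ j :=
                lt_of_lt_of_le (by omega) (Nat.pow_le_pow_right (by norm_num) hj)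
              simp [Nat.testBit_eq_false_of_lt this, hj, Nat.not_lt.mpr hj]
          omega
        obtain ⟨j, hj1, hj2⟩ := this
        refine ⟨2 ^ d + j, Nat.le_add_right _ _, ?_, ?_⟩
        · have : 2 ^ (d + 1) = 2 ^ d + 2 ^ d := by ring
          omega
        · rw [testBit_high, hdivq]
          exact hj2
  · intro n hn
    exact Nat.mod_add_div n (2 ^ 2 ^ d)
  · rintro ⟨m, t⟩ hmt
    simp only [Finset.mem_coe, Finset.mem_product, mem_Cs, Finset.mem_range] at hmt
    obtain ⟨⟨hm, _⟩, _⟩ := hmt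
    simp only [Prod.mk.injEq]
    constructor
    · rw [Nat.add_mul_mod_self_left, Nat.mod_eq_of_lt hm]
    · rw [Nat.add_mul_div_left _ _ hB, Nat.div_eq_of_lt hm, Nat.zero_add]

lemma card_Cs (d : ℕ) : (Cs d).card = 2 * ∏ k ∈ Finset.range d, (2 ^ 2 ^ k - 1) := by
  induction d with
  | zero =>
    simp only [Finset.range_zero, Finset.prod_empty, mul_one]
    have : Cs 0 = Finset.range 2 := by
      ext n
      rw [mem_Cs, Finset.mem_range]
      simp
    rw [this, Finset.card_range]
  | succ d ih =>
    rw [card_Cs_succ, ih, Finset.prod_range_succ]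
    ring

lemma f_pos (k : ℕ) : (0:ℝ) < 1 - 1 / 2 ^ 2 ^ k := by
  have h1 : (2:ℝ) ≤ 2 ^ 2 ^ k := by
    calc (2:ℝ) = 2 ^ 1 := (pow_one 2).symm
    _ ≤ 2 ^ 2 ^ k := by
      apply pow_le_pow_right₀ one_le_two
      exact Nat.one_le_two_pow
  have : (1:ℝ) / 2 ^ 2 ^ k ≤ 1 / 2 := by
    apply one_div_le_one_div_of_le <;> linarith
  linarith

lemma f_half (k : ℕ) : (1:ℝ) / 2 ^ 2 ^ k ≤ (1/2) ^ (k + 1) := by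
  have h : ((1:ℝ)/2) ^ (k+1) = 1 / 2 ^ (k+1) := by rw [div_pow]; norm_num
  rw [h]
  apply one_div_le_one_div_of_le (by positivity)
  apply pow_le_pow_right₀ one_le_two
  exact Nat.succ_le_of_lt (Nat.lt_two_pow_self (n := k))

lemma f_le_one (k : ℕ) : (1 - 1 / 2 ^ 2 ^ k : ℝ) ≤ 1 := by
  have : (0:ℝ) ≤ 1 / 2 ^ 2 ^ k := by positivity
  linarith

lemma neglog_le (x : ℝ) (h0 : 0 ≤ x) (h2 : x ≤ 1/2) : -Real.log (1 - x) ≤ 2 * x := by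
  have h1 : (0:ℝ) < 1 - x := by linarith
  rw [neg_le]
  apply (Real.le_log_iff_exp_le h1).mpr
  rw [Real.exp_neg]
  have hE := Real.add_one_le_exp (2 * x)
  have hEpos := Real.exp_pos (2 * x)
  have hinv : (Real.exp (2 * x))⁻¹ * Real.exp (2 * x) = 1 := inv_mul_cancel₀ (ne_of_gt hEpos)
  have hu : (0:ℝ) < (Real.exp (2 * x))⁻¹ := by positivity
  nlinarith [mul_le_mul_of_nonneg_left hE (le_of_lt hu)]

lemma summable_neglog : Summable (fun k : ℕ => -Real.log (1 - 1 / 2 ^ 2 ^ k)) := by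
  apply Summable.of_nonneg_of_le (f := fun k : ℕ => (1/2 : ℝ) ^ k)
  · intro k
    rw [neg_nonneg]
    apply Real.log_nonpos (le_of_lt (f_pos k)) (f_le_one k)
  · intro k
    calc -Real.log (1 - 1 / 2 ^ 2 ^ k) ≤ 2 * (1 / 2 ^ 2 ^ k) := by
          apply neglog_le _ (by positivity)
          calc (1:ℝ) / 2 ^ 2 ^ k ≤ (1/2) ^ (k+1) := f_half k
            _ ≤ (1/2) ^ 1 := by
                apply pow_le_pow_of_le_one (by norm_num) (by norm_num) (by omega)
            _ = 1/2 := pow_one _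
      _ ≤ 2 * (1/2) ^ (k + 1) := by nlinarith [f_half k]
      _ = (1/2) ^ k := by rw [pow_succ]; ring
  · exact summable_geometric_of_lt_one (by norm_num) (by norm_num)

lemma summable_log : Summable (fun k : ℕ => Real.log (1 - 1 / 2 ^ 2 ^ k)) := by
  simpa using summable_neglog.neg

lemma hasProd_f :
    HasProd (fun k : ℕ => (1 - 1 / 2 ^ 2 ^ k : ℝ))
      (Real.exp (∑' k : ℕ, Real.log (1 - 1 / 2 ^ 2 ^ k))) := by
  have h := summable_log.hasSum.rexp
  have he : (Real.exp ∘ fun k : ℕ => Real.log (1 - 1 / 2 ^ 2 ^ k)) =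
      fun k : ℕ => (1 - 1 / 2 ^ 2 ^ k : ℝ) := by
    funext k
    exact Real.exp_log (f_pos k)
  rwa [he] at h

lemma tprod_le_partial (d : ℕ) :
    (∏' k : ℕ, (1 - 1 / 2 ^ 2 ^ k : ℝ)) ≤ ∏ k ∈ Finset.range d, (1 - 1 / 2 ^ 2 ^ k : ℝ) := by
  rw [hasProd_f.tprod_eq]
  have hsplit := summable_log.sum_add_tsum_nat_add d
  have htail : (∑' k : ℕ, Real.log (1 - 1 / 2 ^ 2 ^ (k + d))) ≤ 0 := by
    apply tsum_nonpos
    intro k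
    exact Real.log_nonpos (le_of_lt (f_pos _)) (f_le_one _)
  have : (∑' k : ℕ, Real.log (1 - 1 / 2 ^ 2 ^ k)) ≤
      ∑ k ∈ Finset.range d, Real.log (1 - 1 / 2 ^ 2 ^ k) := by
    rw [← hsplit]; linarith
  calc Real.exp (∑' k : ℕ, Real.log (1 - 1 / 2 ^ 2 ^ k))
      ≤ Real.exp (∑ k ∈ Finset.range d, Real.log (1 - 1 / 2 ^ 2 ^ k)) := Real.exp_le_exp.mpr this
    _ = ∏ k ∈ Finset.range d, (1 - 1 / 2 ^ 2 ^ k : ℝ) := by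
        rw [Real.exp_sum]
        exact Finset.prod_congr rfl (fun k _ => Real.exp_log (f_pos k))

lemma tprod_pos : 0 < ∏' k : ℕ, (1 - 1 / 2 ^ 2 ^ k : ℝ) := by
  rw [hasProd_f.tprod_eq]; exact Real.exp_pos _

lemma prod_real (d : ℕ) :
    (∏ k ∈ Finset.range d, (1 - 1 / 2 ^ 2 ^ k : ℝ)) * 2 ^ 2 ^ d =
      2 * ∏ k ∈ Finset.range d, ((2:ℝ) ^ 2 ^ k - 1) := by
  induction d with
  | zero => norm_num
  | succ d ih =>
    have hB : (0:ℝ) < 2 ^ 2 ^ d := by positivity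
    have hpow : (2:ℝ) ^ 2 ^ (d + 1) = 2 ^ 2 ^ d * 2 ^ 2 ^ d := by
      rw [← pow_add]
      congr 1
      ring
    rw [Finset.prod_range_succ, Finset.prod_range_succ, hpow]
    have key : (1 - 1 / 2 ^ 2 ^ d : ℝ) * (2 ^ 2 ^ d * 2 ^ 2 ^ d) =
        2 ^ 2 ^ d * ((2:ℝ) ^ 2 ^ d - 1) := by
      field_simp
    calc (∏ k ∈ Finset.range d, (1 - 1 / 2 ^ 2 ^ k : ℝ)) * (1 - 1 / 2 ^ 2 ^ d) *
          (2 ^ 2 ^ d * 2 ^ 2 ^ d)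
        = ((∏ k ∈ Finset.range d, (1 - 1 / 2 ^ 2 ^ k : ℝ)) * 2 ^ 2 ^ d) *
          ((2:ℝ) ^ 2 ^ d - 1) := by rw [mul_assoc, key]; ring
      _ = 2 * ((∏ k ∈ Finset.range d, ((2:ℝ) ^ 2 ^ k - 1)) * ((2:ℝ) ^ 2 ^ d - 1)) := by
          rw [ih]; ring

lemma cast_card (d : ℕ) :
    ((2 * ∏ k ∈ Finset.range d, (2 ^ 2 ^ k - 1) : ℕ) : ℝ) =
      2 * ∏ k ∈ Finset.range d, ((2:ℝ) ^ 2 ^ k - 1) := by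
  rw [Nat.cast_mul, Nat.cast_prod, Nat.cast_ofNat]
  congr 1
  apply Finset.prod_congr rfl
  intro k _
  rw [Nat.cast_sub Nat.one_le_two_pow]
  push_cast
  ring

lemma Ico_ncard (x N : ℕ) : (Set.Ico x (x + N)).ncard = N := by
  rw [← Finset.coe_Ico, Set.ncard_coe_finset, Nat.card_Ico]
  omega

lemma count_le (x N : ℕ) : ((setA ∩ Set.Ico x (x + N)).ncard : ℝ) / N ≤ 1 := by
  have h1 : (setA ∩ Set.Ico x (x + N)).ncard ≤ N := by
    calc (setA ∩ Set.Ico x (x + N)).ncard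
        ≤ (Set.Ico x (x + N)).ncard :=
          Set.ncard_le_ncard Set.inter_subset_right (Set.finite_Ico _ _)
      _ = N := Ico_ncard x N
  rcases Nat.eq_zero_or_pos N with h | h
  · subst h
    have h0 : (setA ∩ Set.Ico x (x + 0)).ncard = 0 := by omega
    simp [h0]
  · rw [div_le_one (by exact_mod_cast h)]
    exact_mod_cast h1

lemma Cs_subset (d : ℕ) : ↑(Cs d) ⊆ setA ∩ Set.Ico 0 (0 + 2 ^ 2 ^ d) := by
  intro n hn
  rw [Finset.mem_coe, mem_Cs] at hn
  obtain ⟨hlt, h⟩ := hn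
  constructor
  · intro k
    rcases Nat.lt_or_ge k d with hk | hk
    · exact h k hk
    · refine ⟨2 ^ k, le_refl _, ?_, ?_⟩
      · exact Nat.pow_lt_pow_succ (by norm_num)
      · have hnk : n < 2 ^ 2 ^ k :=
          lt_of_lt_of_le hlt (Nat.pow_le_pow_right (by norm_num)
            (Nat.pow_le_pow_right (by norm_num) hk))
        simp [Nat.testBit_eq_false_of_lt hnk]
  · simp only [Set.mem_Ico, Nat.zero_add]
    exact ⟨Nat.zero_le _, hlt⟩

lemma key_s12 (d : ℕ) :
    (∏' k : ℕ, (1 - 1 / 2 ^ 2 ^ k : ℝ)) ≤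
      ⨆ x : ℕ, ((setA ∩ Set.Ico x (x + 2 ^ 2 ^ d)).ncard : ℝ) / (2 ^ 2 ^ d : ℕ) := by
  have hNpos : (0:ℝ) < ((2 ^ 2 ^ d : ℕ) : ℝ) := by positivity
  have hcard : ((Cs d).card : ℝ) ≤ ((setA ∩ Set.Ico 0 (0 + 2 ^ 2 ^ d)).ncard : ℝ) := by
    have : (Cs d).card ≤ (setA ∩ Set.Ico 0 (0 + 2 ^ 2 ^ d)).ncard := by
      rw [← Set.ncard_coe_finset]
      exact Set.ncard_le_ncard (Cs_subset d) ((Set.finite_Ico _ _).inter_of_right _)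
    exact_mod_cast this
  have h1 : (∏' k : ℕ, (1 - 1 / 2 ^ 2 ^ k : ℝ)) ≤ ((Cs d).card : ℝ) / ((2 ^ 2 ^ d : ℕ) : ℝ) := by
    have hc : ((Cs d).card : ℝ) = (∏ k ∈ Finset.range d, (1 - 1 / 2 ^ 2 ^ k : ℝ)) *
        ((2 ^ 2 ^ d : ℕ) : ℝ) := by
      rw [card_Cs, _root_.cast_card, ← prod_real]
      norm_num
    rw [hc, mul_div_cancel_right₀ _ (ne_of_gt hNpos)]
    exact tprod_le_partial d
  have h2 : ((Cs d).card : ℝ) / ((2 ^ 2 ^ d : ℕ) : ℝ) ≤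
      ((setA ∩ Set.Ico 0 (0 + 2 ^ 2 ^ d)).ncard : ℝ) / ((2 ^ 2 ^ d : ℕ) : ℝ) := by
    gcongr
  have h3 : ((setA ∩ Set.Ico 0 (0 + 2 ^ 2 ^ d)).ncard : ℝ) / ((2 ^ 2 ^ d : ℕ) : ℝ) ≤
      ⨆ x : ℕ, ((setA ∩ Set.Ico x (x + 2 ^ 2 ^ d)).ncard : ℝ) / (2 ^ 2 ^ d : ℕ) := by
    apply le_ciSup (f := fun x : ℕ =>
      ((setA ∩ Set.Ico x (x + 2 ^ 2 ^ d)).ncard : ℝ) / (2 ^ 2 ^ d : ℕ))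
    refine ⟨1, ?_⟩
    rintro _ ⟨x, rfl⟩
    exact count_le x (2 ^ 2 ^ d)
  exact le_trans h1 (le_trans h2 h3)

theorem stmt_12 :
    (∏' k : ℕ, (1 - 1 / 2 ^ 2 ^ k : ℝ)) ≤ upperBanachDensity setA ∧
      0 < upperBanachDensity setA := by
  have hmain : (∏' k : ℕ, (1 - 1 / 2 ^ 2 ^ k : ℝ)) ≤ upperBanachDensity setA := by
    apply Filter.le_limsup_of_frequently_le
    · apply Filter.frequently_atTop.2
      intro a
      refine ⟨2 ^ 2 ^ a, ?_, ?_⟩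
      · calc a ≤ 2 ^ a := Nat.le_of_lt (Nat.lt_two_pow_self (n := a))
          _ ≤ 2 ^ 2 ^ a := Nat.pow_le_pow_right (by norm_num) (Nat.le_of_lt (Nat.lt_two_pow_self (n := a)))
      · exact key_s12 a
    · refine isBoundedUnder_of ⟨1, fun N => ?_⟩
      exact ciSup_le (fun x => count_le x N)
  exact ⟨hmain, lt_of_lt_of_le tprod_pos hmain⟩
end
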